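/- arXiv:1908.10401 — 4 statements merged into one kernel-verified Lean document; each statement's English description precedes it below -/
import Mathlib

section
/- Let S be a measurable space and h : S×S → ℝ a measurable kernel. Then h is antisymmetric (h(x,y) = −h(y,x) for all x,y ∈ S) if and only if E[h(X,Y)] = 0 for every pair of independent identically distributed S-valued random variables X, Y for which this expectation exists. In particular, the 'only if' direction already follows from the one-point distributions (giving h(x,x) = 0 for all x) and the two-point distributions P(X=x) = P(X=y) = 1/2 (giving h(x,y) + h(y,x) = 0). -/
open MeasureTheory ProbabilityTheory

universe u

open scoped ENNReal

/-! If `X, Y` are i.i.d. with law `μ`, the law `μ ⊗ μ` of `(X, Y)` is invariant under swapping the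
coordinates, so `E h(X, Y) = E h(Y, X)`, which is `-E h(X, Y)` for antisymmetric `h`.

Conversely, the coordinates of `S × S` under `ν ⊗ ν` with `ν = (δ_a + δ_b) / 2` are i.i.d., and the
mean of `h` is then `(h(a,a) + h(a,b) + h(b,a) + h(b,b)) / 4`. Taking `a = b` (a one-point law)
kills the diagonal, after which `h(a,b) + h(b,a) = 0`. -/

namespace ProbabilityTheory

variable {Ω α β E : Type*} [MeasurableSpace Ω] [MeasurableSpace α] [MeasurableSpace β]
  [NormedAddCommGroup E] [NormedSpace ℝ E]

theorem IndepFun.integral_comp_eq_integral_prod {P : Measure Ω} [IsFiniteMeasure P]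
    {X : Ω → α} {Y : Ω → β} (hXY : X ⟂ᵢ[P] Y) (hX : AEMeasurable X P) (hY : AEMeasurable Y P)
    {f : α × β → E} (hf : AEStronglyMeasurable f ((P.map X).prod (P.map Y))) :
    ∫ ω, f (X ω, Y ω) ∂P = ∫ p, f p ∂(P.map X).prod (P.map Y) := by
  rw [← hXY.map_prod_eq_prod_map_map hX hY, integral_map (hX.prodMk hY)]
  rwa [hXY.map_prod_eq_prod_map_map hX hY]

theorem indepFun_fst_snd (μ : Measure α) (ν : Measure β) [IsProbabilityMeasure μ]
    [IsProbabilityMeasure ν] : (Prod.fst : α × β → α) ⟂ᵢ[μ.prod ν] Prod.snd :=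
  indepFun_prod measurable_id measurable_id

theorem identDistrib_fst_snd (μ : Measure α) [IsProbabilityMeasure μ] :
    IdentDistrib (Prod.fst : α × α → α) Prod.snd (μ.prod μ) (μ.prod μ) where
  aemeasurable_fst := measurable_fst.aemeasurable
  aemeasurable_snd := measurable_snd.aemeasurable
  map_eq := by rw [measurePreserving_fst.map_eq, measurePreserving_snd.map_eq]

end ProbabilityTheory

theorem integral_prod_self_eq_zero_of_antisymm {α E : Type*} [MeasurableSpace α]
    [NormedAddCommGroup E] [NormedSpace ℝ E] (μ : Measure α) [SFinite μ] {f : α → α → E}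
    (hf : ∀ x y, f x y = -f y x) : ∫ p, Function.uncurry f p ∂μ.prod μ = 0 := by
  have hswap : ∫ p, Function.uncurry f p ∂μ.prod μ = -∫ p, Function.uncurry f p ∂μ.prod μ := by
    calc ∫ p, Function.uncurry f p ∂μ.prod μ = ∫ p, Function.uncurry f p.swap ∂μ.prod μ :=
          (integral_prod_swap _).symm
      _ = -∫ p, Function.uncurry f p ∂μ.prod μ := by
          rw [← integral_neg]; congr 1; ext ⟨x, y⟩; exact hf y x
  rw [eq_neg_iff_add_eq_zero, ← two_smul ℝ] at hswap
  exact (smul_eq_zero.mp hswap).resolve_left two_ne_zero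

section TwoPointMeasure

variable {α E : Type*} [MeasurableSpace α] [NormedAddCommGroup E]

noncomputable def twoPointMeasure (a b : α) : Measure α :=
  (2 : ℝ≥0∞)⁻¹ • (Measure.dirac a + Measure.dirac b)

instance (a b : α) : IsProbabilityMeasure (twoPointMeasure a b) := by
  constructor
  simp [twoPointMeasure, ENNReal.inv_two_add_inv_two]

theorem integrable_twoPointMeasure {f : α → E} (hf : StronglyMeasurable f) (a b : α) :
    Integrable f (twoPointMeasure a b) := by
  refine Integrable.smul_measure ?_ (by simp)
  exact integrable_add_measure.2
    ⟨integrable_dirac' hf enorm_lt_top, integrable_dirac' hf enorm_lt_top⟩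

theorem integrable_twoPointMeasure_prod {f : α × α → E} (hf : StronglyMeasurable f) (a b : α) :
    Integrable f ((twoPointMeasure a b).prod (twoPointMeasure a b)) := by
  refine (integrable_prod_iff hf.aestronglyMeasurable).2 ⟨?_, ?_⟩
  · exact .of_forall fun _ ↦
      integrable_twoPointMeasure (hf.comp_measurable measurable_prodMk_left) a b
  · exact integrable_twoPointMeasure hf.norm.integral_prod_right' a b

variable [NormedSpace ℝ E] [CompleteSpace E]

theorem integral_twoPointMeasure {f : α → E} (hf : StronglyMeasurable f) (a b : α) :
    ∫ x, f x ∂twoPointMeasure a b = (2 : ℝ)⁻¹ • (f a + f b) := by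
  rw [twoPointMeasure, integral_smul_measure,
    integral_add_measure (integrable_dirac' hf enorm_lt_top) (integrable_dirac' hf enorm_lt_top),
    integral_dirac' _ _ hf, integral_dirac' _ _ hf]
  simp

theorem integral_twoPointMeasure_prod {f : α × α → E} (hf : StronglyMeasurable f) (a b : α) :
    ∫ p, f p ∂(twoPointMeasure a b).prod (twoPointMeasure a b) =
      (4 : ℝ)⁻¹ • (f (a, a) + f (a, b) + f (b, a) + f (b, b)) := by
  have hsection (x : α) :
      ∫ y, f (x, y) ∂twoPointMeasure a b = (2 : ℝ)⁻¹ • (f (x, a) + f (x, b)) :=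
    integral_twoPointMeasure (hf.comp_measurable measurable_prodMk_left) a b
  simp only [integral_prod _ (integrable_twoPointMeasure_prod hf a b), hsection]
  rw [integral_twoPointMeasure]
  · module
  · exact ((hf.comp_measurable (measurable_id.prodMk measurable_const)).add
      (hf.comp_measurable (measurable_id.prodMk measurable_const))).const_smul _

end TwoPointMeasure

/-- A measurable kernel h is antisymmetric (h(x,y) = -h(y,x) for all x,y) if and only
if E[h(X,Y)] = 0 for every pair of independent identically distributed S-valued random
variables X, Y for which the expectation exists.  (The 'only if' direction already
follows from one-point distributions, giving h(x,x) = 0, and two-point distributions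
P(X=x) = P(X=y) = 1/2, giving h(x,y) + h(y,x) = 0.) -/
theorem antisymmetric_iff_mean_zero
    {S : Type u} [MeasurableSpace S]
    (h : S → S → ℝ) (hmeas : Measurable (Function.uncurry h)) :
    (∀ x y : S, h x y = - h y x) ↔
    (∀ (Ω : Type u) (_ : MeasurableSpace Ω) (P : Measure Ω), IsProbabilityMeasure P →
      ∀ X Y : Ω → S, Measurable X → Measurable Y → IndepFun X Y P →
        IdentDistrib X Y P P → Integrable (fun ω => h (X ω) (Y ω)) P →
        ∫ ω, h (X ω) (Y ω) ∂P = 0) := by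
  have hsm : StronglyMeasurable (Function.uncurry h) := hmeas.stronglyMeasurable
  constructor
  · intro hanti Ω _ P _ X Y hX hY hXY hid _
    have hlaw := hXY.integral_comp_eq_integral_prod hX.aemeasurable hY.aemeasurable
      hsm.aestronglyMeasurable
    rw [← hid.map_eq] at hlaw
    exact hlaw.trans (integral_prod_self_eq_zero_of_antisymm _ hanti)
  · intro H x y
    have hiid (μ : Measure S) [IsProbabilityMeasure μ]
        (hμ : Integrable (Function.uncurry h) (μ.prod μ)) :
        ∫ p, Function.uncurry h p ∂μ.prod μ = 0 :=
      H (S × S) _ (μ.prod μ) inferInstance Prod.fst Prod.snd measurable_fst measurable_snd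
        (indepFun_fst_snd μ μ) (identDistrib_fst_snd μ) hμ
    have hpair (a b : S) : h a a + h a b + h b a + h b b = 0 := by
      simpa [integral_twoPointMeasure_prod hsm] using
        hiid (twoPointMeasure a b) (integrable_twoPointMeasure_prod hsm a b)
    have hdiag (z : S) : h z z = 0 := by linarith [hpair z z]
    linarith [hpair x y, hdiag x, hdiag y]
end

section
/- Let (X_i) be a stationary sequence of S-valued random elements, g : S×S → ℝ measurable, and let 𝒰_{g,n} be the polygonal double partial-sum process built from g. If there exists a constant C > 0 such that for all integers 0 ≤ k < m ≤ n one has E(U_{g,m} − U_{g,k})² ≤ C (m−k)(n−(m−k)), then for every 0 ≤ γ < 1/2 the Hölder norm ‖n^{−3/2} 𝒰_{g,n}‖_γ converges to 0 in probability as n → ∞. -/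
open MeasureTheory ProbabilityTheory Filter Topology

noncomputable section

variable {Ω S : Type*} [MeasurableSpace Ω] [MeasurableSpace S]

/-- ρ_γ(t) = (t(1-t))^γ. -/
noncomputable def rho (γ t : ℝ) : ℝ := (t * (1 - t)) ^ γ

/-- Δ_{h,n}(k,m) = Σ_{i=k+1}^m Σ_{j ∈ {1,…,n}∖{k+1,…,m}} h(X_i, X_j). -/
noncomputable def deltaStat (h : S → S → ℝ) (X : ℕ → Ω → S) (n k m : ℕ) (ω : Ω) : ℝ :=
  ∑ i ∈ Finset.Icc (k+1) m, ∑ j ∈ Finset.Icc 1 n \ Finset.Icc (k+1) m, h (X i ω) (X j ω)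

/-- T_n(γ,h) = max over 0 ≤ k < m ≤ n of |Δ_{h,n}(k,m)| / ρ_γ((m-k)/n). -/
noncomputable def Tstat (γ : ℝ) (h : S → S → ℝ) (X : ℕ → Ω → S) (n : ℕ) (ω : Ω) : ℝ :=
  ⨆ p : {p : ℕ × ℕ // p.1 < p.2 ∧ p.2 ≤ n},
    |deltaStat h X n p.1.1 p.1.2 ω| / rho γ (((p.1.2 : ℝ) - (p.1.1 : ℝ)) / (n : ℝ))

/-- the limit statistic T_γ = sup_{0 ≤ s < t ≤ 1} |B(t)-B(s)| / ρ_γ(t-s). -/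
noncomputable def Tgam {Ω' : Type*} (γ : ℝ) (B : ℝ → Ω' → ℝ) (ω : Ω') : ℝ :=
  ⨆ p : {p : ℝ × ℝ // 0 ≤ p.1 ∧ p.1 < p.2 ∧ p.2 ≤ 1},
    |B p.1.2 ω - B p.1.1 ω| / rho γ (p.1.2 - p.1.1)

/-- A standard Brownian bridge on [0,1]: continuous paths, vanishing at 0 and 1,
centered Gaussian finite-dimensional distributions with covariance min(s,t) - s t. -/
def IsBrownianBridge {Ω' : Type*} [MeasurableSpace Ω'] (P : Measure Ω') (B : ℝ → Ω' → ℝ) : Prop :=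
  (∀ ω, ContinuousOn (fun t => B t ω) (Set.Icc 0 1)) ∧
  (∀ᵐ ω ∂P, B 0 ω = 0 ∧ B 1 ω = 0) ∧
  (∀ t, Measurable (B t)) ∧
  ∀ (k : ℕ) (t c : Fin k → ℝ), (∀ i, t i ∈ Set.Icc (0:ℝ) 1) →
    Measure.map (fun ω => ∑ i, c i * B (t i) ω) P =
      gaussianReal 0 ((∑ i, ∑ j, c i * c j * (min (t i) (t j) - t i * t j)).toNNReal)

/-- Gaussian process: all finite linear combinations are Gaussian. -/
def IsGaussianProcess {Ω' : Type*} [MeasurableSpace Ω'] (P : Measure Ω') (Y : ℝ → Ω' → ℝ) : Prop :=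
  ∀ (k : ℕ) (t c : Fin k → ℝ), ∃ (m : ℝ) (v : NNReal),
    Measure.map (fun ω => ∑ i, c i * Y (t i) ω) P = gaussianReal m v

/-- strict stationarity of an ℕ-indexed sequence. -/
def IsStationarySeq (P : Measure Ω) (X : ℕ → Ω → S) : Prop :=
  ∀ (k m : ℕ) (t : Fin m → ℕ),
    Measure.map (fun ω i => X (t i + k) ω) P = Measure.map (fun ω i => X (t i) ω) P

/-- β-mixing functional between two sub-σ-fields: E sup_{A ∈ G} (P(A|F) - P(A)). -/
noncomputable def betaMixGen (P : Measure Ω) (F G : MeasurableSpace Ω) : ℝ :=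
  ∫ ω, (⨆ A : {A : Set Ω // MeasurableSet[G] A},
    ((MeasureTheory.condExp F P ((A : Set Ω).indicator fun _ => (1:ℝ))) ω
      - (P (A : Set Ω)).toReal)) ∂P

/-- σ-field generated by the X_i, i ∈ s. -/
noncomputable def sigmaRange (X : ℕ → Ω → S) (s : Set ℕ) : MeasurableSpace Ω :=
  ⨆ i ∈ s, MeasurableSpace.comap (X i) inferInstance

/-- Coefficients of absolute regularity (β-mixing coefficients). -/
noncomputable def betaCoeff (P : Measure Ω) (X : ℕ → Ω → S) (m : ℕ) : ℝ :=
  ⨆ l : ℕ, betaMixGen P (sigmaRange X (Set.Icc 1 l)) (sigmaRange X (Set.Ici (l + m)))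

/-- U_{h,k} = Σ_{i=1}^k Σ_{j=k+1}^n h(X_i,X_j). -/
noncomputable def Udps (h : S → S → ℝ) (X : ℕ → Ω → S) (n k : ℕ) (ω : Ω) : ℝ :=
  ∑ i ∈ Finset.Icc 1 k, ∑ j ∈ Finset.Icc (k+1) n, h (X i ω) (X j ω)

/-- polygonal double partial sum process 𝒰_{h,n}. -/
noncomputable def Upoly (h : S → S → ℝ) (X : ℕ → Ω → S) (n : ℕ) (ω : Ω) (t : ℝ) : ℝ :=
  Udps h X n ⌊(n:ℝ)*t⌋₊ ω
    + ((n:ℝ)*t - ⌊(n:ℝ)*t⌋₊) * (Udps h X n (⌊(n:ℝ)*t⌋₊ + 1) ω - Udps h X n ⌊(n:ℝ)*t⌋₊ ω)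

/-- partial sum polygonal process W_{h₁,n}. -/
noncomputable def Wpoly (f : S → ℝ) (X : ℕ → Ω → S) (n : ℕ) (ω : Ω) (t : ℝ) : ℝ :=
  (∑ i ∈ Finset.Icc 1 ⌊(n:ℝ)*t⌋₊, f (X i ω))
    + ((n:ℝ)*t - ⌊(n:ℝ)*t⌋₊) * f (X (⌊(n:ℝ)*t⌋₊ + 1) ω)

/-- Hölder norm on [0,1]: ‖x‖_γ = |x(0)| + sup_{s≠t} |x(t)-x(s)|/|t-s|^γ. -/
noncomputable def holderNorm (γ : ℝ) (x : ℝ → ℝ) : ℝ :=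
  |x 0| + ⨆ p : {p : ℝ × ℝ // p.1 ∈ Set.Icc (0:ℝ) 1 ∧ p.2 ∈ Set.Icc (0:ℝ) 1 ∧ p.1 ≠ p.2},
    |x p.1.2 - x p.1.1| / |p.1.2 - p.1.1| ^ γ

/-- membership in the separable Hölder space H^o_γ[0,1]. -/
def MemHolderSpace (γ : ℝ) (x : ℝ → ℝ) : Prop :=
  ContinuousOn x (Set.Icc 0 1) ∧
  Tendsto (fun δ : ℝ =>
      ⨆ p : {p : ℝ × ℝ // p.1 ∈ Set.Icc (0:ℝ) 1 ∧ p.2 ∈ Set.Icc (0:ℝ) 1 ∧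
              p.1 ≠ p.2 ∧ |p.2 - p.1| ≤ δ},
        |x p.1.2 - x p.1.1| / |p.1.2 - p.1.1| ^ γ)
    (nhdsWithin 0 (Set.Ioi 0)) (nhds 0)

/-- continuity of a functional w.r.t. the Hölder norm topology. -/
def HolderCts (γ : ℝ) (f : (ℝ → ℝ) → ℝ) : Prop :=
  ∀ x : ℝ → ℝ, ∀ ε > 0, ∃ δ > 0, ∀ y : ℝ → ℝ,
    holderNorm γ (fun t => y t - x t) < δ → |f y - f x| < ε

/-- convergence in distribution in the Hölder space H^o_γ[0,1], expressed through
bounded test functionals that are continuous w.r.t. the Hölder norm. -/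
def TendstoInHolder {Ω' : Type*} [MeasurableSpace Ω'] (γ : ℝ) (P : Measure Ω)
    (Z : ℕ → Ω → ℝ → ℝ) (P' : Measure Ω') (L : Ω' → ℝ → ℝ) : Prop :=
  ∀ f : (ℝ → ℝ) → ℝ, (∃ M, ∀ x, |f x| ≤ M) → HolderCts γ f →
    Tendsto (fun n => ∫ ω, f (Z n ω) ∂P) atTop (𝓝 (∫ ω', f (L ω') ∂P'))

/-- covariance. -/
noncomputable def covar (P : Measure Ω) (f g : Ω → ℝ) : ℝ :=
  ∫ ω, (f ω - ∫ x, f x ∂P) * (g ω - ∫ x, g x ∂P) ∂P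

/-- sequential compactness w.r.t. the Hölder norm. -/
def HolderSeqCompact (γ : ℝ) (K : Set (ℝ → ℝ)) : Prop :=
  ∀ u : ℕ → (ℝ → ℝ), (∀ n, u n ∈ K) →
    ∃ x ∈ K, ∃ φ : ℕ → ℕ, StrictMono φ ∧
      Tendsto (fun n => holderNorm γ (fun t => u (φ n) t - x t)) atTop (𝓝 0)

open Finset

/-!
Dyadic chaining. An increment `U_m - U_k` is a sum of at most two dyadic block increments
of each length `2 ^ i ≤ m - k`, so the `α`-Hölder constant of `k ↦ U_{g,k}` on the grid is at
most `2 ∑ᵢ 2^(-iα) Dᵢ`, where `Dᵢ` is the `ℓ²` norm of the block increments of length `2 ^ i`.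
The moment hypothesis gives `E Dᵢ ≤ √(3C) n` at every level, so for `γ < α < 1/2` Markov's
inequality bounds `P(‖n^(-3/2) 𝒰_{g,n}‖_γ ≥ ε)` by a constant times `n^(α - 1/2)`; linear
interpolation between grid points costs only a factor `3`.
-/

section DyadicChaining

variable {v : ℕ → ℝ} {D : ℕ → ℝ}

lemma nonneg_of_abs_dyadic_le (hD : ∀ i b, |v ((b + 1) * 2 ^ i) - v (b * 2 ^ i)| ≤ D i) (i : ℕ) :
    0 ≤ D i :=
  (abs_nonneg _).trans (hD i 0)

lemma abs_sub_dyadic_le_mul (hD : ∀ i b, |v ((b + 1) * 2 ^ i) - v (b * 2 ^ i)| ≤ D i)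
    (i p l : ℕ) : |v ((p + l) * 2 ^ i) - v (p * 2 ^ i)| ≤ l * D i := by
  induction l with
  | zero => simp
  | succ l ih =>
    calc |v ((p + (l + 1)) * 2 ^ i) - v (p * 2 ^ i)|
        ≤ |v ((p + l + 1) * 2 ^ i) - v ((p + l) * 2 ^ i)|
          + |v ((p + l) * 2 ^ i) - v (p * 2 ^ i)| := by
          rw [← add_assoc]; exact abs_sub_le _ _ _
      _ ≤ D i + l * D i := add_le_add (hD i (p + l)) ih
      _ = (l + 1 : ℕ) * D i := by push_cast; ring

lemma abs_sub_round_dyadic_le (hD : ∀ i b, |v ((b + 1) * 2 ^ i) - v (b * 2 ^ i)| ≤ D i)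
    (x j : ℕ) : |v x - v (x / 2 ^ j * 2 ^ j)| ≤ ∑ i ∈ range j, D i := by
  induction j with
  | zero => simp
  | succ j ih =>
    set q := x / 2 ^ j
    have hq : x / 2 ^ (j + 1) * 2 ^ (j + 1) = q / 2 * 2 * 2 ^ j := by
      rw [pow_succ, ← Nat.div_div_eq_div_mul, mul_comm (2 ^ j) 2, mul_assoc]
    have hstep : |v (q * 2 ^ j) - v (q / 2 * 2 * 2 ^ j)| ≤ D j := by
      have h := abs_sub_dyadic_le_mul hD j (q / 2 * 2) (q % 2)
      rw [Nat.div_add_mod'] at h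
      exact h.trans (mul_le_of_le_one_left (nonneg_of_abs_dyadic_le hD j)
        (by exact_mod_cast Nat.le_of_lt_succ (Nat.mod_lt q two_pos)))
    calc |v x - v (x / 2 ^ (j + 1) * 2 ^ (j + 1))|
        ≤ |v x - v (q * 2 ^ j)| + |v (q * 2 ^ j) - v (q / 2 * 2 * 2 ^ j)| := by
          rw [hq]; exact abs_sub_le _ _ _
      _ ≤ ∑ i ∈ range (j + 1), D i := by
          rw [sum_range_succ]; exact add_le_add ih hstep

lemma abs_sub_le_two_mul_sum_dyadic (hD : ∀ i b, |v ((b + 1) * 2 ^ i) - v (b * 2 ^ i)| ≤ D i)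
    {k m : ℕ} (hkm : k ≤ m) :
    |v m - v k| ≤ 2 * ∑ i ∈ range (Nat.log 2 (m - k) + 1), D i := by
  set j := Nat.log 2 (m - k)
  have hlt : m < k + 2 * 2 ^ j := by
    have : m - k < 2 ^ (j + 1) := Nat.lt_pow_succ_log_self one_lt_two (m - k)
    rw [pow_succ] at this
    omega
  have hdiv : m / 2 ^ j ≤ k / 2 ^ j + 2 := by
    calc m / 2 ^ j ≤ (k + 2 * 2 ^ j) / 2 ^ j := Nat.div_le_div_right hlt.le
      _ = k / 2 ^ j + 2 := Nat.add_mul_div_right _ _ (by positivity)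
  have hkm' : k / 2 ^ j ≤ m / 2 ^ j := Nat.div_le_div_right hkm
  have hmid : |v (m / 2 ^ j * 2 ^ j) - v (k / 2 ^ j * 2 ^ j)| ≤ 2 * D j := by
    have h := abs_sub_dyadic_le_mul hD j (k / 2 ^ j) (m / 2 ^ j - k / 2 ^ j)
    rw [Nat.add_sub_cancel' hkm'] at h
    exact h.trans (mul_le_mul_of_nonneg_right (by exact_mod_cast (by omega))
      (nonneg_of_abs_dyadic_le hD j))
  calc |v m - v k|
      ≤ |v m - v (m / 2 ^ j * 2 ^ j)| + |v (m / 2 ^ j * 2 ^ j) - v (k / 2 ^ j * 2 ^ j)|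
        + |v k - v (k / 2 ^ j * 2 ^ j)| := by
        rw [abs_sub_comm (v k)]
        exact (abs_sub_le _ (v (k / 2 ^ j * 2 ^ j)) _).trans
          (add_le_add_left (abs_sub_le _ _ _) _)
    _ ≤ ∑ i ∈ range j, D i + 2 * D j + ∑ i ∈ range j, D i := by
        gcongr
        · exact abs_sub_round_dyadic_le hD m j
        · exact abs_sub_round_dyadic_le hD k j
    _ = 2 * ∑ i ∈ range (j + 1), D i := by rw [sum_range_succ]; ring

lemma abs_sub_le_rpow_mul_sum_dyadic (hD : ∀ i b, |v ((b + 1) * 2 ^ i) - v (b * 2 ^ i)| ≤ D i)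
    {α : ℝ} (hα : 0 ≤ α) {k m J : ℕ} (hkm : k ≤ m) (hJ : m - k < 2 ^ (J + 1)) :
    |v m - v k|
      ≤ 2 * ((m - k : ℕ) : ℝ) ^ α * ∑ i ∈ range (J + 1), ((2 : ℝ) ^ i) ^ (-α) * D i := by
  have hD0 := nonneg_of_abs_dyadic_le hD
  have hS0 : 0 ≤ ∑ i ∈ range (J + 1), ((2 : ℝ) ^ i) ^ (-α) * D i :=
    sum_nonneg fun i _ => mul_nonneg (by positivity) (hD0 i)
  rcases hkm.eq_or_lt with rfl | hlt
  · simp only [sub_self, abs_zero]; positivity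
  set r := m - k
  have hr : r ≠ 0 := by omega
  have hjJ : Nat.log 2 r < J + 1 := Nat.log_lt_of_lt_pow hr hJ
  have hweight : ∀ i ∈ range (Nat.log 2 r + 1),
      D i ≤ (r : ℝ) ^ α * (((2 : ℝ) ^ i) ^ (-α) * D i) := by
    intro i hi
    have h2i : (2 : ℝ) ^ i ≤ r := by
      exact_mod_cast (Nat.pow_le_pow_right two_pos (Nat.lt_succ_iff.1 (mem_range.1 hi))).trans
        (Nat.pow_log_le_self 2 hr)
    have hone : 1 ≤ (r : ℝ) ^ α * ((2 : ℝ) ^ i) ^ (-α) := by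
      rw [Real.rpow_neg (by positivity), ← div_eq_mul_inv, ← Real.div_rpow (by positivity)
        (by positivity)]
      exact Real.one_le_rpow ((one_le_div (by positivity)).2 h2i) hα
    rw [← mul_assoc]
    exact le_mul_of_one_le_left (hD0 i) hone
  calc |v m - v k| ≤ 2 * ∑ i ∈ range (Nat.log 2 r + 1), D i :=
        abs_sub_le_two_mul_sum_dyadic hD hkm
    _ ≤ 2 * ∑ i ∈ range (Nat.log 2 r + 1), (r : ℝ) ^ α * (((2 : ℝ) ^ i) ^ (-α) * D i) := by
        gcongr with i hi; exact hweight i hi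
    _ ≤ 2 * ∑ i ∈ range (J + 1), (r : ℝ) ^ α * (((2 : ℝ) ^ i) ^ (-α) * D i) := by
        gcongr
        · intro i _ _; exact mul_nonneg (by positivity) (mul_nonneg (by positivity) (hD0 i))
        · omega
    _ = 2 * (r : ℝ) ^ α * ∑ i ∈ range (J + 1), ((2 : ℝ) ^ i) ^ (-α) * D i := by
        rw [← mul_sum, mul_assoc]

end DyadicChaining

noncomputable def linInterp (v : ℕ → ℝ) (x : ℝ) : ℝ :=
  v ⌊x⌋₊ + (x - ⌊x⌋₊) * (v (⌊x⌋₊ + 1) - v ⌊x⌋₊)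

lemma min_one_le_rpow {u γ : ℝ} (hu : 0 ≤ u) (hγ0 : 0 ≤ γ) (hγ1 : γ ≤ 1) : min 1 u ≤ u ^ γ := by
  rcases le_total u 1 with hu1 | hu1
  · rw [min_eq_right hu1]
    calc u = u ^ (1 : ℝ) := (Real.rpow_one u).symm
      _ ≤ u ^ γ := Real.rpow_le_rpow_of_exponent_ge' hu hu1 hγ0 hγ1
  · rw [min_eq_left hu1]; exact Real.one_le_rpow hu1 hγ0

lemma abs_linInterp_sub_le {v : ℕ → ℝ} {N : ℕ} {M γ : ℝ} (hγ0 : 0 ≤ γ) (hγ1 : γ ≤ 1)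
    (h : ∀ k m, k ≤ m → m ≤ N + 1 → |v m - v k| ≤ M * ((m - k : ℕ) : ℝ) ^ γ)
    {x y : ℝ} (hx : 0 ≤ x) (hxy : x ≤ y) (hy : y ≤ N) :
    |linInterp v y - linInterp v x| ≤ 3 * M * (y - x) ^ γ := by
  have hunit : ∀ k ≤ N, |v (k + 1) - v k| ≤ M := fun k hk => by
    simpa using h k (k + 1) k.le_succ (by omega)
  have hM : 0 ≤ M := (abs_nonneg _).trans (hunit 0 (Nat.zero_le N))
  have hedge : ∀ (w : ℝ) (k : ℕ), 0 ≤ w → w ≤ 1 → w ≤ y - x → k ≤ N →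
      |w * (v (k + 1) - v k)| ≤ M * (y - x) ^ γ := by
    intro w k hw0 hw1 hwxy hk
    rw [abs_mul, abs_of_nonneg hw0, mul_comm]
    exact mul_le_mul (hunit k hk) ((le_min hw1 hwxy).trans
      (min_one_le_rpow (sub_nonneg.2 hxy) hγ0 hγ1)) hw0 hM
  unfold linInterp
  set a := ⌊x⌋₊
  set b := ⌊y⌋₊
  have ha : (a : ℝ) ≤ x := Nat.floor_le hx
  have ha' : x < a + 1 := Nat.lt_floor_add_one x
  have hb : (b : ℝ) ≤ y := Nat.floor_le (hx.trans hxy)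
  have hb' : y < b + 1 := Nat.lt_floor_add_one y
  have hab : a ≤ b := Nat.floor_le_floor hxy
  have hbN : b ≤ N := Nat.floor_le_of_le hy
  rcases hab.eq_or_lt with hab | hab
  · rw [← hab]
    calc |v a + (y - a) * (v (a + 1) - v a) - (v a + (x - a) * (v (a + 1) - v a))|
        = |(y - x) * (v (a + 1) - v a)| := by ring_nf
      _ ≤ M * (y - x) ^ γ :=
          hedge _ _ (by linarith) (by rw [← hab] at hb'; linarith) le_rfl (by omega)
      _ ≤ 3 * M * (y - x) ^ γ := by
          linarith [mul_nonneg hM (Real.rpow_nonneg (sub_nonneg.2 hxy) γ)]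
  · have hab' : (a : ℝ) + 1 ≤ b := by exact_mod_cast hab
    have hmid : |v b - v (a + 1)| ≤ M * (y - x) ^ γ := by
      refine (h (a + 1) b hab (by omega)).trans (mul_le_mul_of_nonneg_left ?_ hM)
      refine Real.rpow_le_rpow (Nat.cast_nonneg _) ?_ hγ0
      rw [Nat.cast_sub hab]; push_cast; linarith
    calc |v b + (y - b) * (v (b + 1) - v b) - (v a + (x - a) * (v (a + 1) - v a))|
        = |(y - b) * (v (b + 1) - v b) + (v b - v (a + 1))
            + (a + 1 - x) * (v (a + 1) - v a)| := by ring_nf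
      _ ≤ |(y - b) * (v (b + 1) - v b)| + |v b - v (a + 1)|
            + |(a + 1 - x) * (v (a + 1) - v a)| := abs_add_three _ _ _
      _ ≤ M * (y - x) ^ γ + M * (y - x) ^ γ + M * (y - x) ^ γ := by
          gcongr
          · exact hedge _ _ (by linarith) (by linarith) (by linarith) hbN
          · exact hedge _ _ (by linarith) (by linarith) (by linarith) (by omega)
      _ = 3 * M * (y - x) ^ γ := by ring

lemma holderNorm_le_of_forall_lt {γ B : ℝ} {y : ℝ → ℝ} (hB : 0 ≤ B)
    (h : ∀ s t, 0 ≤ s → s < t → t ≤ 1 → |y t - y s| ≤ B * (t - s) ^ γ) :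
    holderNorm γ y ≤ |y 0| + B := by
  refine add_le_add_right (Real.iSup_le ?_ hB) _
  rintro ⟨⟨s, t⟩, ⟨hs0, hs1⟩, ⟨ht0, ht1⟩, hne⟩
  dsimp only
  rcases hne.lt_or_gt with hst | hts
  · rw [abs_of_pos (sub_pos.2 hst), div_le_iff₀ (Real.rpow_pos_of_pos (sub_pos.2 hst) γ)]
    exact h s t hs0 hst ht1
  · rw [abs_sub_comm, abs_sub_comm t, abs_of_pos (sub_pos.2 hts),
      div_le_iff₀ (Real.rpow_pos_of_pos (sub_pos.2 hts) γ)]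
    exact h t s ht0 hts hs1

section DoublePartialSums

variable {Ω S : Type*} (h : S → S → ℝ) (X : ℕ → Ω → S) (n : ℕ) (ω : Ω)

lemma Udps_of_le {k : ℕ} (hk : n ≤ k) : Udps h X n k ω = 0 := by
  simp [Udps, Finset.Icc_eq_empty_of_lt (Nat.lt_succ_of_le hk)]

lemma Udps_zero : Udps h X n 0 ω = 0 := by
  simp [Udps]

lemma Udps_min (k : ℕ) : Udps h X n (min k n) ω = Udps h X n k ω := by
  rcases le_total k n with hk | hk
  · rw [min_eq_left hk]
  · rw [min_eq_right hk, Udps_of_le h X n ω le_rfl, Udps_of_le h X n ω hk]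

lemma Upoly_zero : Upoly h X n ω 0 = 0 := by
  simp [Upoly, Udps_zero]

lemma Upoly_eq_linInterp (t : ℝ) :
    Upoly h X n ω t = linInterp (fun k => Udps h X n k ω) (n * t) := rfl

lemma measurable_Udps [MeasurableSpace Ω] [MeasurableSpace S]
    (hh : Measurable (Function.uncurry h)) (hX : ∀ i, Measurable (X i)) (k : ℕ) :
    Measurable (Udps h X n k) :=
  Finset.measurable_sum _ fun i _ => Finset.measurable_sum _ fun j _ =>
    hh.comp ((hX i).prodMk (hX j))

end DoublePartialSums

section DyadicOscillation

noncomputable def dyadicOsc (v : ℕ → ℝ) (n i : ℕ) : ℝ :=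
  √(∑ b ∈ range (n / 2 ^ i + 1), (v ((b + 1) * 2 ^ i) - v (b * 2 ^ i)) ^ 2)

noncomputable def dyadicHolderSum (α : ℝ) (v : ℕ → ℝ) (n : ℕ) : ℝ :=
  ∑ i ∈ range (Nat.log 2 (n + 1) + 1), ((2 : ℝ) ^ i) ^ (-α) * dyadicOsc v n i

variable {v : ℕ → ℝ} {n : ℕ}

lemma dyadicOsc_nonneg (i : ℕ) : 0 ≤ dyadicOsc v n i := Real.sqrt_nonneg _

lemma dyadicHolderSum_nonneg (α : ℝ) : 0 ≤ dyadicHolderSum α v n :=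
  sum_nonneg fun i _ => mul_nonneg (by positivity) (dyadicOsc_nonneg i)

lemma abs_sub_le_dyadicOsc (hv : ∀ k, n ≤ k → v k = 0) (i b : ℕ) :
    |v ((b + 1) * 2 ^ i) - v (b * 2 ^ i)| ≤ dyadicOsc v n i := by
  rcases le_or_gt b (n / 2 ^ i) with hb | hb
  · rw [← Real.sqrt_sq_eq_abs]
    exact Real.sqrt_le_sqrt (single_le_sum (f := fun b => (v ((b + 1) * 2 ^ i) - v (b * 2 ^ i)) ^ 2)
      (fun _ _ => sq_nonneg _) (mem_range.2 (Nat.lt_succ_of_le hb)))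
  · have hn : n ≤ b * 2 ^ i := ((Nat.div_lt_iff_lt_mul (by positivity)).1 hb).le
    rw [hv _ hn, hv _ (hn.trans (Nat.mul_le_mul_right _ b.le_succ)), sub_zero, abs_zero]
    exact dyadicOsc_nonneg i

lemma abs_linInterp_mul_sub_le (hv : ∀ k, n ≤ k → v k = 0) {α : ℝ} (hα0 : 0 ≤ α) (hα1 : α ≤ 1)
    {s t : ℝ} (hs : 0 ≤ s) (hst : s ≤ t) (ht : t ≤ 1) :
    |linInterp v (n * t) - linInterp v (n * s)|
      ≤ 6 * dyadicHolderSum α v n * (n : ℝ) ^ α * (t - s) ^ α := by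
  have hgrid : ∀ k m, k ≤ m → m ≤ n + 1 →
      |v m - v k| ≤ 2 * dyadicHolderSum α v n * ((m - k : ℕ) : ℝ) ^ α := by
    intro k m hkm hm
    rw [mul_right_comm]
    refine abs_sub_le_rpow_mul_sum_dyadic (abs_sub_le_dyadicOsc hv) hα0 hkm ?_
    exact lt_of_le_of_lt (by omega) (Nat.lt_pow_succ_log_self one_lt_two (n + 1))
  calc |linInterp v (n * t) - linInterp v (n * s)|
      ≤ 3 * (2 * dyadicHolderSum α v n) * (n * t - n * s) ^ α :=
        abs_linInterp_sub_le hα0 hα1 hgrid (by positivity) (by gcongr)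
          (mul_le_of_le_one_right n.cast_nonneg ht)
    _ = 6 * dyadicHolderSum α v n * (n : ℝ) ^ α * (t - s) ^ α := by
        rw [← mul_sub, Real.mul_rpow n.cast_nonneg (sub_nonneg.2 hst)]; ring

end DyadicOscillation

lemma holderNorm_Upoly_le {Ω S : Type*} (h : S → S → ℝ) (X : ℕ → Ω → S) {γ α : ℝ}
    (hγ0 : 0 ≤ γ) (hγα : γ ≤ α) (hα1 : α ≤ 1) {n : ℕ} (hn : 0 < n) (ω : Ω) :
    holderNorm γ (fun t => (n : ℝ) ^ (-(3 / 2) : ℝ) * Upoly h X n ω t)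
      ≤ 6 * (n : ℝ) ^ (α - 3 / 2) * dyadicHolderSum α (fun k => Udps h X n k ω) n := by
  have hn' : (0 : ℝ) < n := by exact_mod_cast hn
  have hscale : (n : ℝ) ^ (-(3 / 2) : ℝ) * (n : ℝ) ^ α = (n : ℝ) ^ (α - 3 / 2) := by
    rw [← Real.rpow_add hn']; ring_nf
  have hW := dyadicHolderSum_nonneg α (v := fun k => Udps h X n k ω) (n := n)
  refine (holderNorm_le_of_forall_lt (B := 6 * (n : ℝ) ^ (α - 3 / 2) * dyadicHolderSum α _ n)
    (by positivity) fun s t hs hst ht => ?_).trans (by simp [Upoly_zero])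
  have hinc := abs_linInterp_mul_sub_le (fun k hk => Udps_of_le h X n ω hk) (hγ0.trans hγα) hα1
    hs hst.le ht
  have hexp : (t - s) ^ α ≤ (t - s) ^ γ :=
    Real.rpow_le_rpow_of_exponent_ge' (sub_nonneg.2 hst.le) (by linarith) hγ0 hγα
  rw [← mul_sub, abs_mul, abs_of_pos (by positivity), Upoly_eq_linInterp, Upoly_eq_linInterp,
    ← hscale]
  calc (n : ℝ) ^ (-(3 / 2) : ℝ) * |linInterp (fun k => Udps h X n k ω) (n * t)
        - linInterp (fun k => Udps h X n k ω) (n * s)|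
      ≤ (n : ℝ) ^ (-(3 / 2) : ℝ) * (6 * dyadicHolderSum α (fun k => Udps h X n k ω) n
          * (n : ℝ) ^ α * (t - s) ^ γ) := by
        gcongr
        exact hinc.trans (by gcongr)
    _ = 6 * ((n : ℝ) ^ (-(3 / 2) : ℝ) * (n : ℝ) ^ α)
          * dyadicHolderSum α (fun k => Udps h X n k ω) n * (t - s) ^ γ := by ring

lemma lintegral_ofReal_le_sqrt {α : Type*} [MeasurableSpace α] {μ : Measure α}
    [IsProbabilityMeasure μ] {f : α → ℝ} (hf : AEMeasurable f μ) {c : ℝ} (hc : 0 ≤ c)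
    (h : ∫⁻ a, ENNReal.ofReal (f a ^ 2) ∂μ ≤ ENNReal.ofReal c) :
    ∫⁻ a, ENNReal.ofReal (f a) ∂μ ≤ ENNReal.ofReal √c := by
  have hCS := ENNReal.lintegral_mul_le_Lp_mul_Lq μ Real.HolderConjugate.two_two
    hf.ennreal_ofReal (aemeasurable_const (b := (1 : ENNReal)))
  simp only [Pi.mul_apply, mul_one, lintegral_const, measure_univ, ENNReal.rpow_two, one_pow,
    ENNReal.one_rpow] at hCS
  have hsq : ∀ a, ENNReal.ofReal (f a) ^ 2 ≤ ENNReal.ofReal (f a ^ 2) := fun a => by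
    rcases le_total 0 (f a) with h0 | h0
    · rw [ENNReal.ofReal_pow h0]
    · simp [ENNReal.ofReal_of_nonpos h0]
  calc ∫⁻ a, ENNReal.ofReal (f a) ∂μ
      ≤ (∫⁻ a, ENNReal.ofReal (f a) ^ 2 ∂μ) ^ (1 / 2 : ℝ) := hCS
    _ ≤ (ENNReal.ofReal c) ^ (1 / 2 : ℝ) := by gcongr; exact (lintegral_mono hsq).trans h
    _ = ENNReal.ofReal √c := by
        rw [ENNReal.ofReal_rpow_of_nonneg hc (by norm_num), Real.sqrt_eq_rpow]

lemma lintegral_sq_Udps_sub_le {Ω S : Type*} [MeasurableSpace Ω] {P : Measure Ω}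
    {g : S → S → ℝ} {X : ℕ → Ω → S} {n : ℕ} {C : ℝ} (hC : 0 ≤ C)
    (hb : ∀ k m : ℕ, k < m → m ≤ n →
      ∫⁻ ω, ENNReal.ofReal ((Udps g X n m ω - Udps g X n k ω) ^ 2) ∂P ≤
        ENNReal.ofReal (C * ((m : ℝ) - k) * ((n : ℝ) - ((m : ℝ) - k))))
    {k m : ℕ} (hkm : k ≤ m) :
    ∫⁻ ω, ENNReal.ofReal ((Udps g X n m ω - Udps g X n k ω) ^ 2) ∂P
      ≤ ENNReal.ofReal (C * n * ((m : ℝ) - k)) := by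
  simp only [← Udps_min g X n _ m, ← Udps_min g X n _ k]
  rcases (min_le_min_right n hkm).eq_or_lt with heq | hlt
  · simp [heq]
  refine (hb _ _ hlt (min_le_right m n)).trans (ENNReal.ofReal_le_ofReal ?_)
  have hgap : ((min m n : ℕ) : ℝ) - (min k n : ℕ) ≤ (m : ℝ) - k := by
    have : min m n + k ≤ m + min k n := by omega
    have : ((min m n : ℕ) : ℝ) + k ≤ m + (min k n : ℕ) := by exact_mod_cast this
    linarith
  have hgap0 : 0 ≤ ((min m n : ℕ) : ℝ) - (min k n : ℕ) := by
    have : ((min k n : ℕ) : ℝ) < (min m n : ℕ) := by exact_mod_cast hlt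
    linarith
  have hroom : 0 ≤ (n : ℝ) - (((min m n : ℕ) : ℝ) - (min k n : ℕ)) := by
    have : ((min m n : ℕ) : ℝ) ≤ n := by exact_mod_cast min_le_right m n
    linarith [(Nat.cast_nonneg (min k n) : (0 : ℝ) ≤ _)]
  calc C * (((min m n : ℕ) : ℝ) - (min k n : ℕ)) * ((n : ℝ) - (((min m n : ℕ) : ℝ) - (min k n : ℕ)))
      ≤ C * ((m : ℝ) - k) * n :=
        mul_le_mul (mul_le_mul_of_nonneg_left hgap hC) (sub_le_self _ hgap0) hroom
          (mul_nonneg hC (hgap0.trans hgap))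
    _ = C * n * ((m : ℝ) - k) := by ring

section Moments

variable {Ω : Type*} [MeasurableSpace Ω] {P : Measure Ω} {V : ℕ → Ω → ℝ} {K : ℝ}

lemma lintegral_dyadicOsc_sq_le (hV : ∀ k, Measurable (V k))
    (hinc : ∀ k m : ℕ, k ≤ m →
      ∫⁻ ω, ENNReal.ofReal ((V m ω - V k ω) ^ 2) ∂P ≤ ENNReal.ofReal (K * ((m : ℝ) - k)))
    (hK : 0 ≤ K) (n i : ℕ) :
    ∫⁻ ω, ENNReal.ofReal (dyadicOsc (fun k => V k ω) n i ^ 2) ∂P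
      ≤ ENNReal.ofReal (K * (n + 2 ^ i)) := by
  have hblock : ∀ b : ℕ, ((((b + 1) * 2 ^ i : ℕ) : ℝ) - (b * 2 ^ i : ℕ)) = 2 ^ i := fun b => by
    push_cast; ring
  have hcount : ((n / 2 ^ i + 1 : ℕ) : ℝ) * 2 ^ i ≤ n + 2 ^ i := by
    have : n / 2 ^ i * 2 ^ i ≤ n := Nat.div_mul_le_self n _
    have : ((n / 2 ^ i * 2 ^ i : ℕ) : ℝ) ≤ n := by exact_mod_cast this
    push_cast at this ⊢; linarith
  calc ∫⁻ ω, ENNReal.ofReal (dyadicOsc (fun k => V k ω) n i ^ 2) ∂P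
      = ∑ b ∈ range (n / 2 ^ i + 1),
          ∫⁻ ω, ENNReal.ofReal ((V ((b + 1) * 2 ^ i) ω - V (b * 2 ^ i) ω) ^ 2) ∂P := by
        rw [← lintegral_finsetSum (f := fun b ω =>
            ENNReal.ofReal ((V ((b + 1) * 2 ^ i) ω - V (b * 2 ^ i) ω) ^ 2)) _
          fun b _ => (((hV _).sub (hV _)).pow_const 2).ennreal_ofReal]
        refine lintegral_congr fun ω => ?_
        rw [dyadicOsc, Real.sq_sqrt (sum_nonneg fun _ _ => sq_nonneg _),
          ENNReal.ofReal_sum_of_nonneg fun _ _ => sq_nonneg _]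
    _ ≤ ∑ _b ∈ range (n / 2 ^ i + 1), ENNReal.ofReal (K * 2 ^ i) := by
        gcongr with b
        simpa only [hblock] using hinc (b * 2 ^ i) ((b + 1) * 2 ^ i)
          (Nat.mul_le_mul_right _ b.le_succ)
    _ = ENNReal.ofReal ((n / 2 ^ i + 1 : ℕ) * (K * 2 ^ i)) := by
        rw [sum_const, card_range, nsmul_eq_mul, ENNReal.ofReal_mul (Nat.cast_nonneg _),
          ENNReal.ofReal_natCast]
    _ ≤ ENNReal.ofReal (K * (n + 2 ^ i)) := by
        refine ENNReal.ofReal_le_ofReal ?_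
        calc ((n / 2 ^ i + 1 : ℕ) : ℝ) * (K * 2 ^ i) = K * ((n / 2 ^ i + 1 : ℕ) * 2 ^ i) := by ring
          _ ≤ K * (n + 2 ^ i) := by gcongr

lemma measurable_dyadicOsc (hV : ∀ k, Measurable (V k)) (n i : ℕ) :
    Measurable fun ω => dyadicOsc (fun k => V k ω) n i :=
  (Finset.measurable_sum _ fun _ _ => ((hV _).sub (hV _)).pow_const 2).sqrt

lemma measurable_dyadicHolderSum (hV : ∀ k, Measurable (V k)) (α : ℝ) (n : ℕ) :
    Measurable fun ω => dyadicHolderSum α (fun k => V k ω) n :=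
  Finset.measurable_sum _ fun i _ => (measurable_dyadicOsc hV n i).const_mul _

lemma lintegral_dyadicHolderSum_le [IsProbabilityMeasure P] (hV : ∀ k, Measurable (V k))
    (hinc : ∀ k m : ℕ, k ≤ m →
      ∫⁻ ω, ENNReal.ofReal ((V m ω - V k ω) ^ 2) ∂P ≤ ENNReal.ofReal (K * ((m : ℝ) - k)))
    (hK : 0 ≤ K) {α : ℝ} (hα : 0 < α) (n : ℕ) :
    ∫⁻ ω, ENNReal.ofReal (dyadicHolderSum α (fun k => V k ω) n) ∂P
      ≤ ENNReal.ofReal (√(K * (2 * n + 1)) / (1 - 2 ^ (-α))) := by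
  set L := range (Nat.log 2 (n + 1) + 1)
  set r : ℝ := 2 ^ (-α)
  have hr0 : 0 ≤ r := by positivity
  have hr1 : r < 1 := Real.rpow_lt_one_of_one_lt_of_neg one_lt_two (neg_neg_of_pos hα)
  have hweight : ∀ i : ℕ, ((2 : ℝ) ^ i) ^ (-α) = r ^ i := fun i =>
    (Real.rpow_pow_comm zero_le_two _ _).symm
  have hosc : ∀ i ∈ L, ∫⁻ ω, ENNReal.ofReal (dyadicOsc (fun k => V k ω) n i) ∂P
      ≤ ENNReal.ofReal √(K * (2 * n + 1)) := by
    intro i hi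
    have h2i : (2 : ℝ) ^ i ≤ n + 1 := by
      exact_mod_cast Nat.pow_le_of_le_log n.succ_ne_zero (Nat.lt_succ_iff.1 (mem_range.1 hi))
    refine lintegral_ofReal_le_sqrt (measurable_dyadicOsc hV n i).aemeasurable (by positivity)
      ((lintegral_dyadicOsc_sq_le hV hinc hK n i).trans (ENNReal.ofReal_le_ofReal ?_))
    exact mul_le_mul_of_nonneg_left (by linarith) hK
  calc ∫⁻ ω, ENNReal.ofReal (dyadicHolderSum α (fun k => V k ω) n) ∂P
      = ∑ i ∈ L, ENNReal.ofReal (r ^ i)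
          * ∫⁻ ω, ENNReal.ofReal (dyadicOsc (fun k => V k ω) n i) ∂P := by
        simp_rw [← lintegral_const_mul _ (measurable_dyadicOsc hV n _).ennreal_ofReal,
          ← ENNReal.ofReal_mul (pow_nonneg hr0 _)]
        rw [← lintegral_finsetSum _ fun i _ =>
          ((measurable_dyadicOsc hV n i).const_mul _).ennreal_ofReal]
        refine lintegral_congr fun ω => ?_
        simp_rw [dyadicHolderSum, hweight]
        exact ENNReal.ofReal_sum_of_nonneg fun i _ =>
          mul_nonneg (pow_nonneg hr0 _) (dyadicOsc_nonneg _)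
    _ ≤ ∑ i ∈ L, ENNReal.ofReal (r ^ i) * ENNReal.ofReal √(K * (2 * n + 1)) := by
        gcongr with i hi; exact hosc i hi
    _ = ENNReal.ofReal ((∑ i ∈ L, r ^ i) * √(K * (2 * n + 1))) := by
        rw [sum_mul, ENNReal.ofReal_sum_of_nonneg fun i _ => by positivity]
        simp_rw [ENNReal.ofReal_mul (pow_nonneg hr0 _)]
    _ ≤ ENNReal.ofReal (√(K * (2 * n + 1)) / (1 - r)) := by
        refine ENNReal.ofReal_le_ofReal ?_
        rw [div_eq_inv_mul]
        gcongr
        simpa using geom_sum_Ico_le_of_lt_one (m := 0) (n := Nat.log 2 (n + 1) + 1) hr0 hr1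

end Moments

lemma measure_holderNorm_Upoly_ge_le {Ω S : Type*} [MeasurableSpace Ω] [MeasurableSpace S]
    {P : Measure Ω} [IsProbabilityMeasure P] {X : ℕ → Ω → S} (hX : ∀ i, Measurable (X i))
    {g : S → S → ℝ} (hg : Measurable (Function.uncurry g)) {C : ℝ} (hC : 0 ≤ C) {n : ℕ}
    (hb : ∀ k m : ℕ, k < m → m ≤ n →
      ∫⁻ ω, ENNReal.ofReal ((Udps g X n m ω - Udps g X n k ω) ^ 2) ∂P ≤
        ENNReal.ofReal (C * ((m : ℝ) - k) * ((n : ℝ) - ((m : ℝ) - k))))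
    (hn : 0 < n) {γ α : ℝ} (hγ0 : 0 ≤ γ) (hγα : γ ≤ α) (hα0 : 0 < α) (hα1 : α ≤ 1)
    {ε : ℝ} (hε : 0 < ε) :
    P {ω | ε ≤ holderNorm γ (fun t => (n : ℝ) ^ (-(3 / 2) : ℝ) * Upoly g X n ω t)}
      ≤ ENNReal.ofReal (6 * √(3 * C) / (ε * (1 - 2 ^ (-α))) * (n : ℝ) ^ (α - 1 / 2)) := by
  have hn' : (0 : ℝ) < n := by exact_mod_cast hn
  have hr1 : (2 : ℝ) ^ (-α) < 1 := Real.rpow_lt_one_of_one_lt_of_neg one_lt_two (neg_neg_of_pos hα0)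
  set W := fun ω => dyadicHolderSum α (fun k => Udps g X n k ω) n
  set c := 6 * (n : ℝ) ^ (α - 3 / 2)
  have hc : 0 < c := by positivity
  have hsub : {ω | ε ≤ holderNorm γ (fun t => (n : ℝ) ^ (-(3 / 2) : ℝ) * Upoly g X n ω t)}
      ⊆ {ω | ENNReal.ofReal (ε / c) ≤ ENNReal.ofReal (W ω)} := fun ω hω =>
    ENNReal.ofReal_le_ofReal ((div_le_iff₀' hc).2
      (hω.trans (holderNorm_Upoly_le g X hγ0 hγα hα1 hn ω)))
  have hmoment := lintegral_dyadicHolderSum_le (measurable_Udps g X n hg hX)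
    (fun k m hkm => lintegral_sq_Udps_sub_le hC hb hkm) (by positivity) hα0 n
  have hsqrt : √(C * n * (2 * n + 1)) ≤ √(3 * C) * n := by
    rw [Real.sqrt_le_left (by positivity), mul_pow, Real.sq_sqrt (by positivity)]
    have : (1 : ℝ) ≤ n := by exact_mod_cast hn
    nlinarith [mul_nonneg (mul_nonneg hC hn'.le) (sub_nonneg.2 this)]
  have hpow : (n : ℝ) * (n : ℝ) ^ (α - 3 / 2) = (n : ℝ) ^ (α - 1 / 2) := by
    rw [show α - 1 / 2 = 1 + (α - 3 / 2) by ring, Real.rpow_add hn', Real.rpow_one]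
  calc P {ω | ε ≤ holderNorm γ (fun t => (n : ℝ) ^ (-(3 / 2) : ℝ) * Upoly g X n ω t)}
      ≤ (∫⁻ ω, ENNReal.ofReal (W ω) ∂P) / ENNReal.ofReal (ε / c) :=
        (measure_mono hsub).trans (meas_ge_le_lintegral_div
          (measurable_dyadicHolderSum (measurable_Udps g X n hg hX) α n).ennreal_ofReal.aemeasurable
          (by simpa using div_pos hε hc) ENNReal.ofReal_ne_top)
    _ ≤ ENNReal.ofReal (√(C * n * (2 * n + 1)) / (1 - 2 ^ (-α))) / ENNReal.ofReal (ε / c) := by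
        gcongr
    _ = ENNReal.ofReal (6 / (ε * (1 - 2 ^ (-α)))
          * (√(C * n * (2 * n + 1)) * (n : ℝ) ^ (α - 3 / 2))) := by
        rw [← ENNReal.ofReal_div_of_pos (div_pos hε hc)]
        congr 1
        simp only [c]
        field_simp
    _ ≤ ENNReal.ofReal (6 / (ε * (1 - 2 ^ (-α))) * (√(3 * C) * n * (n : ℝ) ^ (α - 3 / 2))) := by
        gcongr
    _ = ENNReal.ofReal (6 * √(3 * C) / (ε * (1 - 2 ^ (-α))) * (n : ℝ) ^ (α - 1 / 2)) := by
        rw [mul_assoc _ (n : ℝ), hpow]; ring_nf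

theorem degenerate_part_negligible_in_holder_general
    {Ω S : Type*} [MeasurableSpace Ω] [MeasurableSpace S]
    (P : Measure Ω) [IsProbabilityMeasure P]
    (X : ℕ → Ω → S) (hXmeas : ∀ i, Measurable (X i))
    (g : S → S → ℝ) (hgmeas : Measurable (Function.uncurry g))
    (hbound : ∃ C : ℝ, 0 < C ∧ ∀ n k m : ℕ, k < m → m ≤ n →
      ∫⁻ ω, ENNReal.ofReal ((Udps g X n m ω - Udps g X n k ω) ^ 2) ∂P ≤
        ENNReal.ofReal (C * ((m : ℝ) - k) * ((n : ℝ) - ((m : ℝ) - k)))) :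
    ∀ γ : ℝ, 0 ≤ γ → γ < 1 / 2 →
      ∀ ε > 0,
        Tendsto (fun n : ℕ =>
            P {ω | ε ≤ holderNorm γ (fun t => (n : ℝ) ^ (-(3/2) : ℝ) * Upoly g X n ω t)})
          atTop (𝓝 0) := by
  intro γ hγ0 hγ ε hε
  obtain ⟨C, hC, hb⟩ := hbound
  -- chaining at an exponent `α > γ` makes the dyadic weights summable even when `γ = 0`
  obtain ⟨α, hγα, hα⟩ := exists_between hγ
  set K := 6 * √(3 * C) / (ε * (1 - 2 ^ (-α)))
  have hprob : ∀ n : ℕ, 0 < n →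
      P {ω | ε ≤ holderNorm γ (fun t => (n : ℝ) ^ (-(3/2) : ℝ) * Upoly g X n ω t)}
        ≤ ENNReal.ofReal (K * (n : ℝ) ^ (α - 1 / 2)) := fun n hn =>
    measure_holderNorm_Upoly_ge_le hXmeas hgmeas hC.le (hb n) hn hγ0 hγα.le
      (hγ0.trans_lt hγα) (by linarith) hε
  have hlim : Tendsto (fun n : ℕ => ENNReal.ofReal (K * (n : ℝ) ^ (α - 1 / 2))) atTop (𝓝 0) := by
    have hdecay := ((tendsto_rpow_neg_atTop (by linarith : 0 < 1 / 2 - α)).comp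
      tendsto_natCast_atTop_atTop).const_mul K
    simpa using ENNReal.tendsto_ofReal hdecay
  exact tendsto_of_tendsto_of_tendsto_of_le_of_le' tendsto_const_nhds hlim
    (Eventually.of_forall fun _ => zero_le) ((eventually_gt_atTop 0).mono hprob)

/-- **Lemma 3 (Hölderian negligibility of the degenerate part).** If
E(U_{g,m} - U_{g,k})² ≤ C (m-k)(n-(m-k)) for all 0 ≤ k < m ≤ n, then for every
0 ≤ γ < 1/2 the Hölder norm of n^{-3/2} 𝒰_{g,n} converges to 0 in probability. -/
theorem degenerate_part_negligible_in_holder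
    {Ω S : Type*} [MeasurableSpace Ω] [MeasurableSpace S]
    (P : Measure Ω) [IsProbabilityMeasure P]
    (X : ℕ → Ω → S) (hXmeas : ∀ i, Measurable (X i))
    (hstat : IsStationarySeq P X)
    (g : S → S → ℝ) (hgmeas : Measurable (Function.uncurry g))
    (hbound : ∃ C : ℝ, 0 < C ∧ ∀ n k m : ℕ, k < m → m ≤ n →
      ∫⁻ ω, ENNReal.ofReal ((Udps g X n m ω - Udps g X n k ω) ^ 2) ∂P ≤
        ENNReal.ofReal (C * ((m : ℝ) - k) * ((n : ℝ) - ((m : ℝ) - k)))) :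
    ∀ γ : ℝ, 0 ≤ γ → γ < 1 / 2 →
      ∀ ε > 0,
        Tendsto (fun n : ℕ =>
            P {ω | ε ≤ holderNorm γ (fun t => (n : ℝ) ^ (-(3/2) : ℝ) * Upoly g X n ω t)})
          atTop (𝓝 0) :=
  degenerate_part_negligible_in_holder_general P X hXmeas g hgmeas hbound
end
end

section
/- Let g : S×S → ℝ be an antisymmetric measurable kernel and X_1,…,X_n a sample in S. If there exists a constant C > 0 such that for all integers 0 ≤ m_1 < n_1 ≤ m_2 < n_2 one has E( Σ_{i=m_1+1}^{n_1} Σ_{j=m_2+1}^{n_2} g(X_i,X_j) )² ≤ C (n_1−m_1)(n_2−m_2), then for all 0 ≤ k < m ≤ n, E(U_{g,m} − U_{g,k})² ≤ 2C (m−k)(n−(m−k)). -/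
open MeasureTheory ProbabilityTheory Filter Topology

noncomputable section

variable {Ω S : Type*} [MeasurableSpace Ω] [MeasurableSpace S]

/- The increment `U_m - U_k` is the difference of the two rectangle sums over `(k, m] × (m, n]` and
`(0, k] × (k, m]`; by `(a - b)² ≤ 2a² + 2b²` and the rectangle bound its second moment is at most
`2C ((m - k)(n - m) + k (m - k)) = 2C (m - k)(n - (m - k))`. -/

def rectSum {Ω S : Type*} (h : S → S → ℝ) (X : ℕ → Ω → S) (m₁ n₁ m₂ n₂ : ℕ) (ω : Ω) : ℝ :=
  ∑ i ∈ Finset.Icc (m₁ + 1) n₁, ∑ j ∈ Finset.Icc (m₂ + 1) n₂, h (X i ω) (X j ω)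

theorem measurable_rectSum {X : ℕ → Ω → S} (hX : ∀ i, Measurable (X i)) {h : S → S → ℝ}
    (hh : Measurable (Function.uncurry h)) (m₁ n₁ m₂ n₂ : ℕ) :
    Measurable (rectSum h X m₁ n₁ m₂ n₂) :=
  Finset.measurable_sum _ fun i _ => Finset.measurable_sum _ fun j _ =>
    hh.comp ((hX i).prodMk (hX j))

theorem Udps_sub_Udps {Ω S : Type*} (h : S → S → ℝ) (X : ℕ → Ω → S) {n k m : ℕ}
    (hkm : k ≤ m) (hmn : m ≤ n) (ω : Ω) :
    Udps h X n m ω - Udps h X n k ω = rectSum h X k m m n ω - rectSum h X 0 k k m ω := by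
  have Icc_one (b : ℕ) : Finset.Icc 1 b = Finset.Ioc 0 b := Finset.Icc_add_one_left_eq_Ioc 0 b
  simp only [Udps, rectSum, zero_add, Icc_one, Finset.Icc_add_one_left_eq_Ioc]
  rw [← Finset.sum_Ioc_consecutive _ (Nat.zero_le k) hkm]
  simp only [← Finset.sum_Ioc_consecutive _ hkm hmn, Finset.sum_add_distrib]
  ring

theorem lintegral_rectSum_sq_le {Ω S : Type*} [MeasurableSpace Ω] {μ : Measure Ω}
    {h : S → S → ℝ} {X : ℕ → Ω → S} {n : ℕ} {C : ℝ}
    (hbound : ∀ m₁ n₁ m₂ n₂ : ℕ, m₁ < n₁ → n₁ ≤ m₂ → m₂ < n₂ → n₂ ≤ n →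
      ∫⁻ ω, ENNReal.ofReal (rectSum h X m₁ n₁ m₂ n₂ ω ^ 2) ∂μ ≤
        ENNReal.ofReal (C * ((n₁ : ℝ) - m₁) * ((n₂ : ℝ) - m₂)))
    {m₁ n₁ m₂ n₂ : ℕ} (h₁ : m₁ ≤ n₁) (h₂ : n₁ ≤ m₂) (h₃ : m₂ ≤ n₂) (h₄ : n₂ ≤ n) :
    ∫⁻ ω, ENNReal.ofReal (rectSum h X m₁ n₁ m₂ n₂ ω ^ 2) ∂μ ≤
      ENNReal.ofReal (C * ((n₁ : ℝ) - m₁) * ((n₂ : ℝ) - m₂)) := by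
  rcases h₁.eq_or_lt with rfl | h₁
  · simp [rectSum]
  rcases h₃.eq_or_lt with rfl | h₃
  · simp [rectSum]
  exact hbound m₁ n₁ m₂ n₂ h₁ h₂ h₃ h₄

theorem lintegral_ofReal_sub_sq_le {Ω : Type*} [MeasurableSpace Ω] {μ : Measure Ω} {f : Ω → ℝ}
    (hf : AEMeasurable f μ) (g : Ω → ℝ) :
    ∫⁻ ω, ENNReal.ofReal ((f ω - g ω) ^ 2) ∂μ ≤
      2 * ∫⁻ ω, ENNReal.ofReal (f ω ^ 2) ∂μ + 2 * ∫⁻ ω, ENNReal.ofReal (g ω ^ 2) ∂μ := by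
  have hf2 : AEMeasurable (fun ω => 2 * ENNReal.ofReal (f ω ^ 2)) μ :=
    ((hf.pow_const 2).ennreal_ofReal).const_mul 2
  rw [← lintegral_const_mul' _ _ ENNReal.ofNat_ne_top,
    ← lintegral_const_mul' _ _ ENNReal.ofNat_ne_top, ← lintegral_add_left' hf2]
  refine lintegral_mono fun ω => ?_
  rw [← ENNReal.ofReal_ofNat 2, ← ENNReal.ofReal_mul zero_le_two, ← ENNReal.ofReal_mul zero_le_two,
    ← ENNReal.ofReal_add (by positivity) (by positivity)]
  exact ENNReal.ofReal_le_ofReal (by nlinarith [sq_nonneg (f ω + g ω)])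

theorem ENNReal.ofReal_mul_add_ofReal_mul (c : ℝ) {x y : ℝ} (hx : 0 ≤ x) (hy : 0 ≤ y) :
    ENNReal.ofReal (c * x) + ENNReal.ofReal (c * y) = ENNReal.ofReal (c * (x + y)) := by
  rcases le_total 0 c with hc | hc
  · rw [mul_add, ENNReal.ofReal_add (mul_nonneg hc hx) (mul_nonneg hc hy)]
  · simp [ENNReal.ofReal_of_nonpos, mul_nonpos_of_nonpos_of_nonneg hc, hx, hy, add_nonneg]

theorem rectangle_bound_implies_increment_bound_general
    {Ω S : Type*} [MeasurableSpace Ω] [MeasurableSpace S]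
    (P : Measure Ω)
    (X : ℕ → Ω → S) (hXmeas : ∀ i, Measurable (X i))
    (g : S → S → ℝ) (hgmeas : Measurable (Function.uncurry g))
    (n : ℕ)
    (C : ℝ)
    (hbound : ∀ m1 n1 m2 n2 : ℕ, m1 < n1 → n1 ≤ m2 → m2 < n2 → n2 ≤ n →
      ∫⁻ ω, ENNReal.ofReal
          ((∑ i ∈ Finset.Icc (m1 + 1) n1, ∑ j ∈ Finset.Icc (m2 + 1) n2,
            g (X i ω) (X j ω)) ^ 2) ∂P ≤
        ENNReal.ofReal (C * ((n1 : ℝ) - m1) * ((n2 : ℝ) - m2))) :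
    ∀ k m : ℕ, k < m → m ≤ n →
      ∫⁻ ω, ENNReal.ofReal ((Udps g X n m ω - Udps g X n k ω) ^ 2) ∂P ≤
        ENNReal.ofReal (2 * C * ((m : ℝ) - k) * ((n : ℝ) - ((m : ℝ) - k))) := by
  intro k m hkm hmn
  have hkm' : (k : ℝ) ≤ m := by exact_mod_cast hkm.le
  have hmn' : (m : ℝ) ≤ n := by exact_mod_cast hmn
  calc ∫⁻ ω, ENNReal.ofReal ((Udps g X n m ω - Udps g X n k ω) ^ 2) ∂P
      = ∫⁻ ω, ENNReal.ofReal ((rectSum g X k m m n ω - rectSum g X 0 k k m ω) ^ 2) ∂P := by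
        simp only [Udps_sub_Udps g X hkm.le hmn]
    _ ≤ 2 * ENNReal.ofReal (C * ((m : ℝ) - k) * ((n : ℝ) - m))
        + 2 * ENNReal.ofReal (C * ((k : ℝ) - (0 : ℕ)) * ((m : ℝ) - k)) := by
        refine (lintegral_ofReal_sub_sq_le
          (measurable_rectSum hXmeas hgmeas k m m n).aemeasurable _).trans ?_
        gcongr <;> exact lintegral_rectSum_sq_le hbound (by omega) (by omega) (by omega) (by omega)
    _ = ENNReal.ofReal (2 * C * ((m : ℝ) - k) * ((n : ℝ) - ((m : ℝ) - k))) := by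
        rw [← mul_add, mul_assoc C, mul_assoc C,
          ENNReal.ofReal_mul_add_ofReal_mul C (by nlinarith) (by push_cast; nlinarith),
          ← ENNReal.ofReal_ofNat 2, ← ENNReal.ofReal_mul zero_le_two]
        congr 1
        push_cast
        ring

/-- **Remark after Lemma 3.** For an antisymmetric kernel g, the rectangle bound
E(Σ_{i=m₁+1}^{n₁} Σ_{j=m₂+1}^{n₂} g(X_i,X_j))² ≤ C (n₁-m₁)(n₂-m₂) implies
E(U_{g,m} - U_{g,k})² ≤ 2C (m-k)(n-(m-k)) for all 0 ≤ k < m ≤ n. -/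
theorem rectangle_bound_implies_increment_bound
    {Ω S : Type*} [MeasurableSpace Ω] [MeasurableSpace S]
    (P : Measure Ω) [IsProbabilityMeasure P]
    (X : ℕ → Ω → S) (hXmeas : ∀ i, Measurable (X i))
    (g : S → S → ℝ) (hgmeas : Measurable (Function.uncurry g))
    (hanti : ∀ x y, g x y = - g y x)
    (n : ℕ)
    (C : ℝ) (hC : 0 < C)
    (hbound : ∀ m1 n1 m2 n2 : ℕ, m1 < n1 → n1 ≤ m2 → m2 < n2 → n2 ≤ n →
      ∫⁻ ω, ENNReal.ofReal
          ((∑ i ∈ Finset.Icc (m1 + 1) n1, ∑ j ∈ Finset.Icc (m2 + 1) n2,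
            g (X i ω) (X j ω)) ^ 2) ∂P ≤
        ENNReal.ofReal (C * ((n1 : ℝ) - m1) * ((n2 : ℝ) - m2))) :
    ∀ k m : ℕ, k < m → m ≤ n →
      ∫⁻ ω, ENNReal.ofReal ((Udps g X n m ω - Udps g X n k ω) ^ 2) ∂P ≤
        ENNReal.ofReal (2 * C * ((m : ℝ) - k) * ((n : ℝ) - ((m : ℝ) - k))) :=
  rectangle_bound_implies_increment_bound_general P X hXmeas g hgmeas n C hbound
end
end

section
/- Let (X_i)_{i∈ℕ} be a stationary sequence of S-valued random elements and h_1 : S → ℝ measurable. Assume that for some q > 2 there is a constant c_q > 0 such that for all integers 0 ≤ k < m ≤ n, E| Σ_{i=k+1}^{m} h_1(X_i) |^q ≤ c_q (m−k)^{q/2}. Then for any 0 ≤ γ < 1/2 − 1/q, the sequence of laws of n^{−1/2} W_{h_1,n} is uniformly tight in the Hölder space H^o_γ[0,1]. -/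
open MeasureTheory ProbabilityTheory Filter Topology

noncomputable section

variable {Ω S : Type*} [MeasurableSpace Ω] [MeasurableSpace S]

/-!
Choose `γ < θ < 1/2 - 1/q`. Call a sample path good if every dyadic block increment satisfies
`|S((i+1)2^j) - S(i 2^j)| ≤ η √n (2^j/n)^θ` for `(i+1)2^j ≤ n`, where `S` is the partial-sum
sequence. Chaining through the dyadic grid bounds every increment `|S l - S k|` by
`C_θ η √n ((l-k)/n)^θ`, so on good paths `n^{-1/2} W_n` lies in the `θ`-Hölder ball of radius
`3 C_θ η`; by Arzelà–Ascoli and interpolation between the sup norm and the `θ`-Hölder bound, this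
ball is compact in `H^o_γ`. By Markov's inequality and the moment bound, the blocks of level `j`
fail with total probability at most `c_q η^{-q} (2^j/n)^(q/2 - θq - 1)`: a geometric series in `j`
(the exponent is positive because `θ < 1/2 - 1/q`), so the paths fail to be good with probability
`O(η^{-q})`, uniformly in `n`.
-/

namespace HolderTightness

def DyadicIncrementsLE (s : ℕ → ℝ) (n : ℕ) (a : ℕ → ℝ) : Prop :=
  ∀ j i, (i + 1) * 2 ^ j ≤ n → |s ((i + 1) * 2 ^ j) - s (i * 2 ^ j)| ≤ a j

section Chaining

open Finset

variable {s : ℕ → ℝ} {n : ℕ} {r A : ℝ}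

lemma abs_sub_grid_le (H : DyadicIncrementsLE s n fun j => A * r ^ j)
    (j a : ℕ) : ∀ c : ℕ, (a + c) * 2 ^ j ≤ n →
      |s ((a + c) * 2 ^ j) - s (a * 2 ^ j)| ≤ c * (A * r ^ j)
  | 0, _ => by simp
  | c + 1, hc => by
    have hc' : (a + c) * 2 ^ j ≤ n := le_trans (by gcongr; omega) hc
    calc |s ((a + (c + 1)) * 2 ^ j) - s (a * 2 ^ j)|
        ≤ |s ((a + c + 1) * 2 ^ j) - s ((a + c) * 2 ^ j)|
          + |s ((a + c) * 2 ^ j) - s (a * 2 ^ j)| := abs_sub_le ..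
      _ ≤ A * r ^ j + c * (A * r ^ j) :=
          add_le_add (H j (a + c) hc) (abs_sub_grid_le H j a c hc')
      _ = ((c + 1 : ℕ) : ℝ) * (A * r ^ j) := by push_cast; ring

lemma abs_sub_dyadic_floor_le (hA : 0 ≤ A) (hr : 0 ≤ r)
    (H : DyadicIncrementsLE s n fun j => A * r ^ j)
    {k : ℕ} (hk : k ≤ n) (m : ℕ) :
    |s k - s (k / 2 ^ m * 2 ^ m)| ≤ ∑ j ∈ range m, A * r ^ j := by
  induction m with
  | zero => simp
  | succ m ih =>
    set a := k / 2 ^ m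
    have hfloor : k / 2 ^ (m + 1) * 2 ^ (m + 1) = 2 * (a / 2) * 2 ^ m := by
      rw [pow_succ, ← Nat.div_div_eq_div_mul]; ring
    have hstep : |s (a * 2 ^ m) - s (2 * (a / 2) * 2 ^ m)| ≤ A * r ^ m := by
      have hgrid := abs_sub_grid_le H m (2 * (a / 2)) (a % 2)
      rw [Nat.div_add_mod] at hgrid
      calc _ ≤ ((a % 2 : ℕ) : ℝ) * (A * r ^ m) := hgrid ((Nat.div_mul_le_self k _).trans hk)
        _ ≤ 1 * (A * r ^ m) := by
            gcongr
            exact_mod_cast Nat.le_of_lt_succ (Nat.mod_lt a two_pos)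
        _ = A * r ^ m := one_mul _
    calc |s k - s (k / 2 ^ (m + 1) * 2 ^ (m + 1))|
        ≤ |s k - s (a * 2 ^ m)| + |s (a * 2 ^ m) - s (2 * (a / 2) * 2 ^ m)| := by
          rw [hfloor]; exact abs_sub_le ..
      _ ≤ ∑ j ∈ range m, A * r ^ j + A * r ^ m := add_le_add ih hstep
      _ = ∑ j ∈ range (m + 1), A * r ^ j := (sum_range_succ ..).symm

lemma geom_sum_le_div_sub_one (hr : 1 < r) (m : ℕ) :
    ∑ j ∈ range m, r ^ j ≤ r ^ m / (r - 1) := by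
  rw [geom_sum_eq hr.ne']
  gcongr
  linarith

lemma abs_sub_le_of_dyadic_increments (hA : 0 ≤ A) (hr : 1 < r)
    (H : DyadicIncrementsLE s n fun j => A * r ^ j)
    {k l : ℕ} (hkl : k < l) (hl : l ≤ n) :
    |s l - s k| ≤ (2 / (r - 1) + 2) * A * r ^ Nat.log 2 (l - k) := by
  set j := Nat.log 2 (l - k)
  set p := 2 ^ j
  -- `[k, l]` is shorter than `2p`, so it contains at most three multiples of `p`; the outer ones
  -- are joined to `k` and `l` by one-sided chains through the finer levels.
  have hlk : l - k < p * 2 := Nat.lt_pow_succ_log_self one_lt_two _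
  set a := k / p
  set b := l / p
  have hka : k < a * p + p := Nat.lt_div_mul_add (by positivity)
  have hbl : b * p ≤ l := Nat.div_mul_le_self l p
  have hab : a ≤ b := Nat.div_le_div_right hkl.le
  have hba : b - a ≤ 2 := by
    have : b * p < (a + 3) * p := by
      have : l < k + p * 2 := by omega
      nlinarith
    have := Nat.lt_of_mul_lt_mul_right this
    omega
  have hgeom : ∑ i ∈ range j, A * r ^ i ≤ A * r ^ j / (r - 1) := by
    rw [← mul_sum, mul_div_assoc]
    exact mul_le_mul_of_nonneg_left (geom_sum_le_div_sub_one hr j) hA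
  have hk := abs_sub_dyadic_floor_le hA (by linarith) H (hkl.le.trans hl) j
  have hl' := abs_sub_dyadic_floor_le hA (by linarith) H hl j
  have hmid : |s (b * p) - s (a * p)| ≤ 2 * (A * r ^ j) := by
    have hgrid := abs_sub_grid_le H j a (b - a)
    rw [Nat.add_sub_cancel' hab] at hgrid
    calc _ ≤ ((b - a : ℕ) : ℝ) * (A * r ^ j) := hgrid (hbl.trans hl)
      _ ≤ 2 * (A * r ^ j) := by gcongr; exact_mod_cast hba
  calc |s l - s k|
      ≤ |s l - s (b * p)| + |s (b * p) - s (a * p)| + |s k - s (a * p)| := by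
        rw [abs_sub_comm (s k)]
        linarith [abs_sub_le (s l) (s (b * p)) (s (a * p)), abs_sub_le (s l) (s (a * p)) (s k)]
    _ ≤ A * r ^ j / (r - 1) + 2 * (A * r ^ j) + A * r ^ j / (r - 1) := by
        gcongr
        · exact hl'.trans hgeom
        · exact hk.trans hgeom
    _ = (2 / (r - 1) + 2) * A * r ^ j := by ring

def chainingConstant (θ : ℝ) : ℝ := 2 / (2 ^ θ - 1) + 2

lemma chainingConstant_nonneg {θ : ℝ} (hθ : 0 < θ) : 0 ≤ chainingConstant θ := by
  have : 1 < (2 : ℝ) ^ θ := Real.one_lt_rpow one_lt_two hθ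
  unfold chainingConstant
  positivity

lemma abs_sub_le_of_dyadic_increments_rpow {θ : ℝ} (hθ : 0 < θ) (hA : 0 ≤ A)
    (H : DyadicIncrementsLE s n fun j => A * ((2 : ℝ) ^ j) ^ θ)
    {k l : ℕ} (hkl : k ≤ l) (hl : l ≤ n) :
    |s l - s k| ≤ chainingConstant θ * A * ((l : ℝ) - k) ^ θ := by
  rcases hkl.eq_or_lt with rfl | hkl
  · rw [sub_self, abs_zero, sub_self, Real.zero_rpow hθ.ne', mul_zero]
  have H' : DyadicIncrementsLE s n fun j => A * ((2 : ℝ) ^ θ) ^ j := by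
    simpa only [Real.rpow_pow_comm zero_le_two] using H
  have hpow : ((2 : ℝ) ^ θ) ^ Nat.log 2 (l - k) ≤ ((l : ℝ) - k) ^ θ := by
    rw [Real.rpow_pow_comm zero_le_two]
    gcongr
    rw [← Nat.cast_sub hkl.le]
    exact_mod_cast Nat.pow_log_le_self 2 (by omega)
  calc |s l - s k| ≤ chainingConstant θ * A * ((2 : ℝ) ^ θ) ^ Nat.log 2 (l - k) :=
        abs_sub_le_of_dyadic_increments hA (Real.one_lt_rpow one_lt_two hθ) H' hkl hl
    _ ≤ chainingConstant θ * A * ((l : ℝ) - k) ^ θ := by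
        gcongr
        exact mul_nonneg (chainingConstant_nonneg hθ) hA

end Chaining

section Polygonal

variable {s : ℕ → ℝ} {n : ℕ} {θ A : ℝ}

def polygonal (s : ℕ → ℝ) (x : ℝ) : ℝ :=
  s ⌊x⌋₊ + (x - ⌊x⌋₊) * (s (⌊x⌋₊ + 1) - s ⌊x⌋₊)

lemma abs_mul_le_mul_rpow {c d D : ℝ} (hθ0 : 0 ≤ θ) (hθ1 : θ ≤ 1) (hA : 0 ≤ A)
    (hc0 : 0 ≤ c) (hc1 : c ≤ 1) (hcd : c ≤ d) (hD : 0 < c → |D| ≤ A) :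
    |c * D| ≤ A * d ^ θ := by
  rcases hc0.eq_or_lt with rfl | hc
  · rw [zero_mul, abs_zero]
    exact mul_nonneg hA (Real.rpow_nonneg hcd θ)
  calc |c * D| = c * |D| := by rw [abs_mul, abs_of_pos hc]
    _ ≤ c ^ θ * A := mul_le_mul (Real.self_le_rpow_of_le_one hc0 hc1 hθ1) (hD hc)
        (abs_nonneg _) (Real.rpow_nonneg hc0 θ)
    _ ≤ A * d ^ θ := by rw [mul_comm]; gcongr

lemma abs_polygonal_sub_le (hθ0 : 0 ≤ θ) (hθ1 : θ ≤ 1) (hA : 0 ≤ A)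
    (H : ∀ k l : ℕ, k ≤ l → l ≤ n → |s l - s k| ≤ A * ((l : ℝ) - k) ^ θ)
    {x y : ℝ} (hx : 0 ≤ x) (hxy : x ≤ y) (hy : y ≤ n) :
    |polygonal s y - polygonal s x| ≤ 3 * A * (y - x) ^ θ := by
  have hstep : ∀ k : ℕ, (k : ℝ) < n → |s (k + 1) - s k| ≤ A := fun k hk => by
    simpa using H k (k + 1) k.le_succ (by exact_mod_cast hk)
  have hax : (⌊x⌋₊ : ℝ) ≤ x := Nat.floor_le hx
  have hxa : x < ⌊x⌋₊ + 1 := Nat.lt_floor_add_one x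
  have hby : (⌊y⌋₊ : ℝ) ≤ y := Nat.floor_le (hx.trans hxy)
  have hyb : y < ⌊y⌋₊ + 1 := Nat.lt_floor_add_one y
  have hab : ⌊x⌋₊ ≤ ⌊y⌋₊ := Nat.floor_le_floor hxy
  unfold polygonal
  generalize ⌊x⌋₊ = a at *
  generalize ⌊y⌋₊ = b at *
  have hyx : 0 ≤ (y - x) ^ θ := Real.rpow_nonneg (by linarith) θ
  rcases hab.eq_or_lt with rfl | hab
  · rw [show ∀ u v : ℝ, u + (y - a) * (v - u) - (u + (x - a) * (v - u)) = (y - x) * (v - u)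
      by intros; ring]
    exact (abs_mul_le_mul_rpow hθ0 hθ1 hA (by linarith) (by linarith) le_rfl
      fun hpos => hstep a (by linarith)).trans (by nlinarith)
  · have hab' : (a : ℝ) + 1 ≤ b := by exact_mod_cast hab
    have h1 : |s b - s (a + 1)| ≤ A * (y - x) ^ θ := by
      refine (H _ _ hab (by exact_mod_cast hby.trans hy)).trans ?_
      gcongr
      · push_cast; linarith
      · push_cast; linarith
    have h2 : |(a + 1 - x) * (s (a + 1) - s a)| ≤ A * (y - x) ^ θ :=
      abs_mul_le_mul_rpow hθ0 hθ1 hA (by linarith) (by linarith) (by linarith)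
        fun _ => hstep a (by linarith)
    have h3 : |(y - b) * (s (b + 1) - s b)| ≤ A * (y - x) ^ θ :=
      abs_mul_le_mul_rpow hθ0 hθ1 hA (by linarith) (by linarith) (by linarith)
        fun hpos => hstep b (by linarith)
    calc |s b + (y - b) * (s (b + 1) - s b) - (s a + (x - a) * (s (a + 1) - s a))|
        = |(s b - s (a + 1)) + (a + 1 - x) * (s (a + 1) - s a)
            + (y - b) * (s (b + 1) - s b)| := by ring_nf
      _ ≤ |s b - s (a + 1)| + |(a + 1 - x) * (s (a + 1) - s a)|
            + |(y - b) * (s (b + 1) - s b)| := abs_add_three _ _ _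
      _ ≤ 3 * A * (y - x) ^ θ := by linarith

end Polygonal

section HolderBall

open Set BoundedContinuousFunction

def holderBall (θ b : ℝ) : Set (ℝ → ℝ) :=
  {x | x 0 = 0 ∧ ∀ s ∈ Icc (0 : ℝ) 1, ∀ t ∈ Icc (0 : ℝ) 1, |x t - x s| ≤ b * |t - s| ^ θ}

variable {γ θ b : ℝ}

lemma tendsto_mul_rpow_nhdsGT_zero (B : ℝ) {p : ℝ} (hp : 0 < p) :
    Tendsto (fun δ : ℝ => B * δ ^ p) (𝓝[>] 0) (𝓝 0) := by
  have h := ((Real.continuousAt_rpow_const 0 p (Or.inr hp.le)).tendsto.const_mul B).mono_left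
    (nhdsWithin_le_nhds (s := Ioi 0))
  rwa [Real.zero_rpow hp.ne', mul_zero] at h

lemma div_rpow_le_mul_rpow_sub {v r δ B : ℝ} (hγθ : γ ≤ θ) (hB : 0 ≤ B) (hr : 0 < r)
    (hrδ : r ≤ δ) (hv : v ≤ B * r ^ θ) : v / r ^ γ ≤ B * δ ^ (θ - γ) := by
  rw [div_le_iff₀ (Real.rpow_pos_of_pos hr γ)]
  calc v ≤ B * r ^ θ := hv
    _ = B * r ^ (θ - γ) * r ^ γ := by rw [mul_assoc, ← Real.rpow_add hr, sub_add_cancel]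
    _ ≤ B * δ ^ (θ - γ) * r ^ γ := by gcongr

lemma nonneg_of_mem_holderBall {x : ℝ → ℝ} (hx : x ∈ holderBall θ b) : 0 ≤ b := by
  simpa using
    (abs_nonneg _).trans (hx.2 0 (left_mem_Icc.2 zero_le_one) 1 (right_mem_Icc.2 zero_le_one))

lemma continuousOn_of_mem_holderBall (hθ : 0 < θ) {x : ℝ → ℝ} (hx : x ∈ holderBall θ b) :
    ContinuousOn x (Icc 0 1) := by
  rw [Metric.continuousOn_iff]
  intro c hc ε hε
  obtain ⟨δ, hδε, hδ⟩ := ((tendsto_mul_rpow_nhdsGT_zero b hθ).eventually (gt_mem_nhds hε)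
    |>.and self_mem_nhdsWithin).exists
  refine ⟨δ, hδ, fun t ht htc => ?_⟩
  rw [Real.dist_eq] at htc ⊢
  calc |x t - x c| ≤ b * |t - c| ^ θ := hx.2 c hc t ht
    _ ≤ b * δ ^ θ := by have := nonneg_of_mem_holderBall hx; gcongr
    _ < ε := hδε

lemma memHolderSpace_of_mem_holderBall (hγ0 : 0 ≤ γ) (hγθ : γ < θ) {x : ℝ → ℝ}
    (hx : x ∈ holderBall θ b) : MemHolderSpace γ x := by
  have hb := nonneg_of_mem_holderBall hx
  refine ⟨continuousOn_of_mem_holderBall (hγ0.trans_lt hγθ) hx, ?_⟩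
  refine squeeze_zero' (Eventually.of_forall fun δ => Real.iSup_nonneg fun p => by positivity)
    ?_ (tendsto_mul_rpow_nhdsGT_zero b (sub_pos.2 hγθ))
  filter_upwards [self_mem_nhdsWithin] with δ hδ
  refine Real.iSup_le (fun ⟨⟨s, t⟩, hs, ht, hst, hδ'⟩ => ?_) (by have := hδ.out.le; positivity)
  exact div_rpow_le_mul_rpow_sub hγθ.le hb (abs_pos.2 (sub_ne_zero.2 (Ne.symm hst))) hδ'
    (hx.2 s hs t ht)

lemma holderNorm_nonneg (γ : ℝ) (x : ℝ → ℝ) : 0 ≤ holderNorm γ x :=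
  add_nonneg (abs_nonneg _) (Real.iSup_nonneg fun _ => by positivity)

/-- Increments over gaps longer than `η` are controlled by the sup bound `d`, shorter ones by the
`θ`-Hölder bound. -/
lemma holderNorm_le_of_abs_le {f : ℝ → ℝ} {d B η : ℝ} (hγ0 : 0 ≤ γ) (hγθ : γ ≤ θ) (hB : 0 ≤ B)
    (hη : 0 < η) (hd : ∀ t ∈ Icc (0 : ℝ) 1, |f t| ≤ d)
    (hf : ∀ s ∈ Icc (0 : ℝ) 1, ∀ t ∈ Icc (0 : ℝ) 1, |f t - f s| ≤ B * |t - s| ^ θ) :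
    holderNorm γ f ≤ d + (2 * d / η ^ γ + B * η ^ (θ - γ)) := by
  have hd0 : 0 ≤ d := (abs_nonneg _).trans (hd 0 (left_mem_Icc.2 zero_le_one))
  refine add_le_add (hd 0 (left_mem_Icc.2 zero_le_one)) (Real.iSup_le ?_ (by positivity))
  rintro ⟨⟨s, t⟩, hs, ht, hst⟩
  have hr : 0 < |t - s| := abs_pos.2 (sub_ne_zero.2 (Ne.symm hst))
  rcases le_or_gt |t - s| η with hsmall | hlarge
  · have := div_rpow_le_mul_rpow_sub hγθ hB hr hsmall (hf s hs t ht)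
    have : 0 ≤ 2 * d / η ^ γ := by positivity
    linarith
  · have hsup : |f t - f s| ≤ 2 * d := by
      linarith [abs_sub (f t) (f s), hd s hs, hd t ht]
    calc |f t - f s| / |t - s| ^ γ ≤ 2 * d / η ^ γ := by
          gcongr
      _ ≤ 2 * d / η ^ γ + B * η ^ (θ - γ) := le_add_of_nonneg_right (by positivity)

lemma isClosed_holderBall : IsClosed (holderBall θ b) := by
  simp only [holderBall, ofPred_and, ofPred_forall]
  exact (isClosed_eq (continuous_apply 0) continuous_const).inter <|
    isClosed_iInter fun s => isClosed_iInter fun _ => isClosed_iInter fun t =>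
      isClosed_iInter fun _ =>
        isClosed_le ((continuous_apply t).sub (continuous_apply s)).abs continuous_const

lemma isCompact_setOf_iccExtend_mem_holderBall (hθ : 0 < θ) (hb : 0 ≤ b) :
    IsCompact {g : Icc (0 : ℝ) 1 →ᵇ ℝ | IccExtend zero_le_one g ∈ holderBall θ b} := by
  set A := {g : Icc (0 : ℝ) 1 →ᵇ ℝ | IccExtend zero_le_one g ∈ holderBall θ b}
  have hA : ∀ g ∈ A, ∀ c a : Icc (0 : ℝ) 1, |g a - g c| ≤ b * |(a : ℝ) - c| ^ θ := by
    intro g hg c a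
    simpa only [IccExtend_val] using hg.2 c c.2 a a.2
  have hAclosed : IsClosed A := isClosed_holderBall.preimage <|
    continuous_pi fun t => continuous_eval_const (projIcc 0 1 zero_le_one t)
  have hAbdd : ∀ g t, g ∈ A → g t ∈ Icc (-b) b := by
    intro g t hg
    have h0 : g 0 = 0 := by simpa using hg.1
    have ht : |(t : ℝ) - (0 : Icc (0 : ℝ) 1)| ^ θ ≤ 1 := by
      rw [Icc.coe_zero, sub_zero, abs_of_nonneg t.2.1]
      exact Real.rpow_le_one t.2.1 t.2.2 hθ.le
    have := hA g hg 0 t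
    rw [h0, sub_zero] at this
    exact abs_le.1 (this.trans (mul_le_of_le_one_right hb ht))
  have hAequi : Equicontinuous ((↑) : A → Icc (0 : ℝ) 1 → ℝ) := by
    intro c
    rw [Metric.equicontinuousAt_iff]
    intro ε hε
    obtain ⟨δ, hδε, hδ⟩ := ((tendsto_mul_rpow_nhdsGT_zero b hθ).eventually (gt_mem_nhds hε)
      |>.and self_mem_nhdsWithin).exists
    refine ⟨δ, hδ, fun a ha g => ?_⟩
    rw [Subtype.dist_eq, Real.dist_eq] at ha
    rw [Real.dist_eq]
    calc |g.1 c - g.1 a| ≤ b * |(c : ℝ) - a| ^ θ := hA g g.2 a c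
      _ ≤ b * δ ^ θ := by rw [abs_sub_comm]; gcongr
      _ < ε := hδε
  exact arzela_ascoli₂ _ isCompact_Icc A hAclosed hAbdd hAequi

lemma exists_subseq_tendstoUniformlyOn (hθ : 0 < θ) {u : ℕ → ℝ → ℝ}
    (hu : ∀ n, u n ∈ holderBall θ b) :
    ∃ x ∈ holderBall θ b, ∃ φ : ℕ → ℕ, StrictMono φ ∧
      TendstoUniformlyOn (fun n => u (φ n)) x atTop (Icc 0 1) := by
  let F : ℕ → (Icc (0 : ℝ) 1 →ᵇ ℝ) := fun n => mkOfCompact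
    ⟨(Icc 0 1).domRestrict (u n), (continuousOn_of_mem_holderBall hθ (hu n)).domRestrict⟩
  have hF : ∀ n, IccExtend zero_le_one (F n) ∈ holderBall θ b := fun n => by
    refine ⟨?_, fun s hs t ht => ?_⟩
    · rw [IccExtend_of_mem _ _ (left_mem_Icc.2 zero_le_one)]; exact (hu n).1
    · rw [IccExtend_of_mem _ _ hs, IccExtend_of_mem _ _ ht]; exact (hu n).2 s hs t ht
  obtain ⟨g, hg, φ, hφ, hconv⟩ :=
    (isCompact_setOf_iccExtend_mem_holderBall hθ (nonneg_of_mem_holderBall (hu 0))).isSeqCompact hF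
  refine ⟨IccExtend zero_le_one g, hg, φ, hφ, ?_⟩
  rw [tendstoUniformlyOn_iff_tendstoUniformly_comp_coe,
    show IccExtend zero_le_one g ∘ Subtype.val = g from funext (IccExtend_val zero_le_one g)]
  exact tendsto_iff_tendstoUniformly.1 hconv

lemma holderSeqCompact_holderBall (hγ0 : 0 ≤ γ) (hγθ : γ < θ) :
    HolderSeqCompact γ (holderBall θ b) := by
  intro u hu
  obtain ⟨x, hx, φ, hφ, hconv⟩ := exists_subseq_tendstoUniformlyOn (hγ0.trans_lt hγθ) hu
  refine ⟨x, hx, φ, hφ, ?_⟩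
  have hb := nonneg_of_mem_holderBall hx
  have hdiff : ∀ n, ∀ s ∈ Icc (0 : ℝ) 1, ∀ t ∈ Icc (0 : ℝ) 1,
      |(u (φ n) t - x t) - (u (φ n) s - x s)| ≤ 2 * b * |t - s| ^ θ := fun n s hs t ht => by
    calc |(u (φ n) t - x t) - (u (φ n) s - x s)|
        = |(u (φ n) t - u (φ n) s) - (x t - x s)| := by ring_nf
      _ ≤ |u (φ n) t - u (φ n) s| + |x t - x s| := abs_sub _ _
      _ ≤ 2 * b * |t - s| ^ θ := by linarith [(hu (φ n)).2 s hs t ht, hx.2 s hs t ht]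
  refine tendsto_order.2 ⟨fun a ha => .of_forall fun n => ha.trans_le (holderNorm_nonneg _ _),
    fun ε hε => ?_⟩
  obtain ⟨η, hηε, hη⟩ := ((tendsto_mul_rpow_nhdsGT_zero (2 * b) (sub_pos.2 hγθ)).eventually
    (gt_mem_nhds (half_pos hε)) |>.and self_mem_nhdsWithin).exists
  have hη : 0 < η := hη
  set d := ε / 2 / (1 + 2 / η ^ γ)
  have hd : d + 2 * d / η ^ γ = ε / 2 := by
    have : 0 < η ^ γ := Real.rpow_pos_of_pos hη γ
    simp only [d]
    field_simp
  filter_upwards [Metric.tendstoUniformlyOn_iff.1 hconv d (by positivity)] with n hn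
  calc holderNorm γ (fun t => u (φ n) t - x t)
      ≤ d + (2 * d / η ^ γ + 2 * b * η ^ (θ - γ)) :=
        holderNorm_le_of_abs_le hγ0 hγθ.le (by positivity) hη
          (fun t ht => by rw [abs_sub_comm, ← Real.dist_eq]; exact (hn t ht).le) (hdiff n)
    _ < ε := by linarith

lemma rescaled_polygonal_mem_holderBall {s : ℕ → ℝ} (hs0 : s 0 = 0) {n : ℕ} (hn : n ≠ 0)
    {η : ℝ} (hθ0 : 0 < θ) (hθ1 : θ ≤ 1) (hη : 0 ≤ η)
    (H : DyadicIncrementsLE s n fun j => η * (n : ℝ) ^ (1 / 2 : ℝ) * ((2 : ℝ) ^ j / n) ^ θ) :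
    (fun t => (n : ℝ) ^ (-(1 / 2) : ℝ) * polygonal s (n * t))
      ∈ holderBall θ (3 * chainingConstant θ * η) := by
  have hN : (0 : ℝ) < n := by positivity
  set A := η * (n : ℝ) ^ (1 / 2 : ℝ) / (n : ℝ) ^ θ
  have hA : 0 ≤ A := by positivity
  have hC := chainingConstant_nonneg hθ0
  have H' : DyadicIncrementsLE s n fun j => A * ((2 : ℝ) ^ j) ^ θ := fun j i hi => by
    refine (H j i hi).trans_eq ?_
    dsimp only
    rw [Real.div_rpow (by positivity) hN.le]
    ring
  refine ⟨by simp [polygonal, hs0], fun t ht u hu => ?_⟩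
  wlog htu : t ≤ u generalizing t u
  · rw [abs_sub_comm, abs_sub_comm u]
    exact this u hu t ht (le_of_not_ge htu)
  have hnu : (n : ℝ) * u ≤ n := mul_le_of_le_one_right hN.le hu.2
  calc |(n : ℝ) ^ (-(1 / 2) : ℝ) * polygonal s (n * u)
        - (n : ℝ) ^ (-(1 / 2) : ℝ) * polygonal s (n * t)|
      = (n : ℝ) ^ (-(1 / 2) : ℝ) * |polygonal s (n * u) - polygonal s (n * t)| := by
        rw [← mul_sub, abs_mul, abs_of_pos (by positivity)]
    _ ≤ (n : ℝ) ^ (-(1 / 2) : ℝ) * (3 * (chainingConstant θ * A) * (n * u - n * t) ^ θ) := by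
        gcongr
        exact abs_polygonal_sub_le hθ0.le hθ1 (mul_nonneg hC hA)
          (fun k l hkl hl => abs_sub_le_of_dyadic_increments_rpow hθ0 hA H' hkl hl)
          (by nlinarith [ht.1]) (by nlinarith) hnu
    _ = 3 * chainingConstant θ * η * |u - t| ^ θ := by
        rw [← mul_sub, Real.mul_rpow hN.le (by linarith), abs_of_nonneg (by linarith),
          Real.rpow_neg hN.le]
        simp only [A]
        field_simp

end HolderBall

section Probability

open Finset

lemma sum_range_log_div_rpow_le {n : ℕ} (hn : n ≠ 0) {β : ℝ} (hβ : 0 < β) :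
    ∑ j ∈ range (Nat.log 2 n + 1), ((2 : ℝ) ^ j / n) ^ β ≤ 1 / (1 - (2 : ℝ) ^ (-β)) := by
  set J := Nat.log 2 n
  set ρ := (2 : ℝ) ^ (-β)
  have hρ0 : 0 ≤ ρ := by positivity
  have hρ1 : ρ < 1 := Real.rpow_lt_one_of_one_lt_of_neg one_lt_two (neg_neg_of_pos hβ)
  have h2J : (2 : ℝ) ^ J ≤ n := by exact_mod_cast Nat.pow_log_le_self 2 hn
  have hterm : ∀ j ∈ range (J + 1), ((2 : ℝ) ^ j / n) ^ β ≤ ρ ^ (J - j) := by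
    intro j hj
    have hjJ : j ≤ J := Nat.lt_succ_iff.1 (mem_range.1 hj)
    calc ((2 : ℝ) ^ j / n) ^ β ≤ ((2 : ℝ) ^ j / 2 ^ J) ^ β := by gcongr
      _ = ρ ^ (J - j) := by
        rw [← Nat.sub_add_cancel hjJ, pow_add, div_mul_cancel_right₀ (by positivity),
          Nat.add_sub_cancel, Real.inv_rpow (by positivity), ← Real.rpow_pow_comm zero_le_two,
          ← inv_pow, ← Real.rpow_neg zero_le_two]
  calc ∑ j ∈ range (J + 1), ((2 : ℝ) ^ j / n) ^ β ≤ ∑ j ∈ range (J + 1), ρ ^ (J - j) :=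
        sum_le_sum hterm
    _ = ∑ j ∈ range (J + 1), ρ ^ j := sum_range_reflect (ρ ^ ·) (J + 1)
    _ ≤ ρ ^ 0 / (1 - ρ) := by rw [range_eq_Ico]; exact geom_sum_Ico_le_of_lt_one hρ0 hρ1
    _ = 1 / (1 - ρ) := by rw [pow_zero]

lemma sum_dyadic_markov_bounds_le {n : ℕ} (hn : n ≠ 0) {q θ cq η : ℝ} (hcq : 0 ≤ cq) (hη : 0 < η)
    (hβ : 0 < q / 2 - θ * q - 1) :
    ∑ j ∈ range (Nat.log 2 n + 1), ((n / 2 ^ j : ℕ) : ℝ) *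
        (cq * ((2 : ℝ) ^ j) ^ (q / 2) / (η * (n : ℝ) ^ (1 / 2 : ℝ) * ((2 : ℝ) ^ j / n) ^ θ) ^ q)
      ≤ cq * (1 / (1 - (2 : ℝ) ^ (-(q / 2 - θ * q - 1)))) / η ^ q := by
  have hN : (0 : ℝ) < n := by positivity
  have hterm : ∀ j, ((n / 2 ^ j : ℕ) : ℝ) *
        (cq * ((2 : ℝ) ^ j) ^ (q / 2) / (η * (n : ℝ) ^ (1 / 2 : ℝ) * ((2 : ℝ) ^ j / n) ^ θ) ^ q)
      ≤ cq / η ^ q * ((2 : ℝ) ^ j / n) ^ (q / 2 - θ * q - 1) := by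
    intro j
    have hx : (0 : ℝ) < 2 ^ j := by positivity
    have hu : (0 : ℝ) < 2 ^ j / n := div_pos hx hN
    calc _ ≤ (n : ℝ) / 2 ^ j * (cq * ((2 : ℝ) ^ j) ^ (q / 2) /
          (η * (n : ℝ) ^ (1 / 2 : ℝ) * ((2 : ℝ) ^ j / n) ^ θ) ^ q) := by
          gcongr
          exact_mod_cast Nat.cast_div_le
      _ = cq / η ^ q * ((2 : ℝ) ^ j / n) ^ (q / 2 - θ * q - 1) := by
          have h2j : (2 : ℝ) ^ j = 2 ^ j / n * n := by field_simp
          rw [Real.mul_rpow (by positivity) (by positivity), Real.mul_rpow hη.le (by positivity),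
            ← Real.rpow_mul hN.le, ← Real.rpow_mul hu.le, Real.rpow_sub hu, Real.rpow_sub hu,
            Real.rpow_one]
          conv_lhs => rw [h2j, Real.mul_rpow hu.le hN.le]
          field_simp
  calc _ ≤ ∑ j ∈ range (Nat.log 2 n + 1), cq / η ^ q * ((2 : ℝ) ^ j / n) ^ (q / 2 - θ * q - 1) :=
        sum_le_sum fun j _ => hterm j
    _ = cq / η ^ q * ∑ j ∈ range (Nat.log 2 n + 1), ((2 : ℝ) ^ j / n) ^ (q / 2 - θ * q - 1) :=
        (mul_sum ..).symm
    _ ≤ cq / η ^ q * (1 / (1 - (2 : ℝ) ^ (-(q / 2 - θ * q - 1)))) := by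
        gcongr
        exact sum_range_log_div_rpow_le hn hβ
    _ = _ := by ring

variable {P : Measure Ω}

lemma measure_lt_abs_le_of_lintegral_rpow_le {f : Ω → ℝ} (hf : Measurable f) {q c a : ℝ}
    (hq : 0 < q) (ha : 0 < a) (hmom : ∫⁻ ω, ENNReal.ofReal (|f ω| ^ q) ∂P ≤ ENNReal.ofReal c) :
    P {ω | a < |f ω|} ≤ ENNReal.ofReal (c / a ^ q) := by
  have haq : 0 < a ^ q := Real.rpow_pos_of_pos ha q
  calc P {ω | a < |f ω|}
      ≤ P {ω | ENNReal.ofReal (a ^ q) ≤ ENNReal.ofReal (|f ω| ^ q)} := by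
        refine measure_mono fun ω hω => ENNReal.ofReal_le_ofReal ?_
        exact Real.rpow_le_rpow ha.le (le_of_lt hω) hq.le
    _ ≤ (∫⁻ ω, ENNReal.ofReal (|f ω| ^ q) ∂P) / ENNReal.ofReal (a ^ q) :=
        meas_ge_le_lintegral_div (by fun_prop) (ENNReal.ofReal_pos.2 haq).ne' ENNReal.ofReal_ne_top
    _ ≤ ENNReal.ofReal c / ENNReal.ofReal (a ^ q) := by gcongr
    _ = ENNReal.ofReal (c / a ^ q) := (ENNReal.ofReal_div_of_pos haq).symm

lemma measure_exists_dyadic_increment_gt_le {S : ℕ → Ω → ℝ} (hS : ∀ k, Measurable (S k))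
    {q cq : ℝ} (hq : 0 < q) (hcq : 0 ≤ cq)
    (hmom : ∀ k m : ℕ, k < m → ∫⁻ ω, ENNReal.ofReal (|S m ω - S k ω| ^ q) ∂P ≤
      ENNReal.ofReal (cq * ((m : ℝ) - k) ^ (q / 2)))
    {n : ℕ} (hn : n ≠ 0) {θ η : ℝ} (hη : 0 < η) (hβ : 0 < q / 2 - θ * q - 1) :
    P {ω | ¬DyadicIncrementsLE (S · ω) n fun j =>
        η * (n : ℝ) ^ (1 / 2 : ℝ) * ((2 : ℝ) ^ j / n) ^ θ}
      ≤ ENNReal.ofReal (cq * (1 / (1 - (2 : ℝ) ^ (-(q / 2 - θ * q - 1)))) / η ^ q) := by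
  set a : ℕ → ℝ := fun j => η * (n : ℝ) ^ (1 / 2 : ℝ) * ((2 : ℝ) ^ j / n) ^ θ
  have ha : ∀ j, 0 < a j := fun j => by positivity
  set B : ℕ → ℕ → Set Ω := fun j i => {ω | a j < |S ((i + 1) * 2 ^ j) ω - S (i * 2 ^ j) ω|}
  have hsub : {ω | ¬DyadicIncrementsLE (S · ω) n a}
      ⊆ ⋃ j ∈ range (Nat.log 2 n + 1), ⋃ i ∈ range (n / 2 ^ j), B j i := by
    intro ω hω
    simp only [DyadicIncrementsLE, Set.mem_ofPred_eq, not_forall, not_le] at hω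
    obtain ⟨j, i, hi, hω⟩ := hω
    simp only [Set.mem_iUnion, mem_range, exists_prop]
    refine ⟨j, Nat.lt_succ_of_le (Nat.le_log_of_pow_le one_lt_two ?_), i,
      (Nat.le_div_iff_mul_le (by positivity)).2 hi, hω⟩
    exact (Nat.le_mul_of_pos_left _ i.succ_pos).trans hi
  have hB : ∀ j i, P (B j i) ≤ ENNReal.ofReal (cq * ((2 : ℝ) ^ j) ^ (q / 2) / a j ^ q) := by
    intro j i
    have hlt : i * 2 ^ j < (i + 1) * 2 ^ j := by have := Nat.two_pow_pos j; nlinarith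
    refine measure_lt_abs_le_of_lintegral_rpow_le ((hS _).sub (hS _)) hq (ha j)
      ((hmom _ _ hlt).trans_eq ?_)
    push_cast
    ring_nf
  calc _ ≤ P (⋃ j ∈ range (Nat.log 2 n + 1), ⋃ i ∈ range (n / 2 ^ j), B j i) := measure_mono hsub
    _ ≤ ∑ j ∈ range (Nat.log 2 n + 1), ∑ i ∈ range (n / 2 ^ j), P (B j i) :=
        (measure_biUnion_finset_le _ _).trans (sum_le_sum fun j _ => measure_biUnion_finset_le _ _)
    _ ≤ ∑ j ∈ range (Nat.log 2 n + 1), ∑ i ∈ range (n / 2 ^ j),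
          ENNReal.ofReal (cq * ((2 : ℝ) ^ j) ^ (q / 2) / a j ^ q) := by
        gcongr with j _ i _
        exact hB j i
    _ = ∑ j ∈ range (Nat.log 2 n + 1),
          ENNReal.ofReal ((n / 2 ^ j : ℕ) * (cq * ((2 : ℝ) ^ j) ^ (q / 2) / a j ^ q)) :=
        sum_congr rfl fun j _ => by
          rw [sum_const, card_range, nsmul_eq_mul, ENNReal.ofReal_mul (Nat.cast_nonneg _),
            ENNReal.ofReal_natCast]
    _ = ENNReal.ofReal (∑ j ∈ range (Nat.log 2 n + 1),
          (n / 2 ^ j : ℕ) * (cq * ((2 : ℝ) ^ j) ^ (q / 2) / a j ^ q)) :=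
        (ENNReal.ofReal_sum_of_nonneg fun j _ => by have := ha j; positivity).symm
    _ ≤ _ := ENNReal.ofReal_le_ofReal (sum_dyadic_markov_bounds_le hn hcq hη hβ)

end Probability

section PartialSums

open Finset

lemma sum_Icc_one_sub_sum_Icc_one (f : ℕ → ℝ) {k m : ℕ} (hkm : k ≤ m) :
    ∑ i ∈ Icc 1 m, f i - ∑ i ∈ Icc 1 k, f i = ∑ i ∈ Icc (k + 1) m, f i := by
  have hIcc : ∀ a, Icc 1 a = Ioc 0 a := Icc_add_one_left_eq_Ioc 0
  rw [hIcc, hIcc, Icc_add_one_left_eq_Ioc, sub_eq_iff_eq_add', sum_Ioc_consecutive f k.zero_le hkm]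

lemma wpoly_eq_polygonal {Ω S : Type*} (f : S → ℝ) (X : ℕ → Ω → S) (n : ℕ) (ω : Ω) (t : ℝ) :
    Wpoly f X n ω t = polygonal (fun k => ∑ i ∈ Icc 1 k, f (X i ω)) (n * t) := by
  rw [Wpoly, polygonal, sum_Icc_succ_top (Nat.le_add_left 1 _)]
  ring

end PartialSums

end HolderTightness

open HolderTightness

theorem partial_sum_process_tight_in_holder_general
    {Ω S : Type*} [MeasurableSpace Ω] [MeasurableSpace S]
    (P : Measure Ω)
    (X : ℕ → Ω → S) (hXmeas : ∀ i, Measurable (X i))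
    (h1 : S → ℝ) (h1meas : Measurable h1)
    (q : ℝ) (hq : 2 < q)
    (cq : ℝ) (hcq : 0 < cq)
    (hros : ∀ k m : ℕ, k < m →
      ∫⁻ ω, ENNReal.ofReal (|∑ i ∈ Finset.Icc (k + 1) m, h1 (X i ω)| ^ q) ∂P ≤
        ENNReal.ofReal (cq * ((m : ℝ) - k) ^ (q / 2))) :
    ∀ γ : ℝ, 0 ≤ γ → γ < 1 / 2 - 1 / q →
      ∀ ε > 0, ∃ K : Set (ℝ → ℝ),
        (∀ x ∈ K, MemHolderSpace γ x) ∧ HolderSeqCompact γ K ∧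
        ∀ n : ℕ, 1 ≤ n →
          P {ω | (fun t => (n : ℝ) ^ (-(1/2) : ℝ) * Wpoly h1 X n ω t) ∉ K} ≤
            ENNReal.ofReal ε := by
  intro γ hγ0 hγ ε hε
  obtain ⟨θ, hγθ, hθq⟩ := exists_between hγ
  have hθ0 : 0 < θ := hγ0.trans_lt hγθ
  have hθ1 : θ ≤ 1 := by linarith [one_div_pos.2 (by linarith : (0 : ℝ) < q)]
  have hβ : 0 < q / 2 - θ * q - 1 := by
    have := mul_lt_mul_of_pos_right hθq (by linarith : 0 < q)
    rw [sub_mul, one_div_mul_cancel (by linarith)] at this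
    linarith
  obtain ⟨η, hηε, hη⟩ :
      ∃ η, cq * (1 / (1 - (2 : ℝ) ^ (-(q / 2 - θ * q - 1)))) / η ^ q < ε ∧ 0 < η :=
    ((tendsto_const_nhds.div_atTop (tendsto_rpow_atTop (by linarith))).eventually
      (gt_mem_nhds hε) |>.and (eventually_gt_atTop 0)).exists
  refine ⟨holderBall θ (3 * chainingConstant θ * η),
    fun x hx => memHolderSpace_of_mem_holderBall hγ0 hγθ hx, holderSeqCompact_holderBall hγ0 hγθ,
    fun n hn => ?_⟩
  set partialSum : ℕ → Ω → ℝ := fun k ω => ∑ i ∈ Finset.Icc 1 k, h1 (X i ω)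
  have hmeas : ∀ k, Measurable (partialSum k) := fun k =>
    Finset.measurable_sum _ fun i _ => h1meas.comp (hXmeas i)
  have hmom : ∀ k m : ℕ, k < m → ∫⁻ ω, ENNReal.ofReal (|partialSum m ω - partialSum k ω| ^ q) ∂P ≤
      ENNReal.ofReal (cq * ((m : ℝ) - k) ^ (q / 2)) := fun k m hkm => by
    simpa only [partialSum, sum_Icc_one_sub_sum_Icc_one _ hkm.le] using hros k m hkm
  calc P {ω | (fun t => (n : ℝ) ^ (-(1/2) : ℝ) * Wpoly h1 X n ω t) ∉ _}
      ≤ P {ω | ¬DyadicIncrementsLE (partialSum · ω) n fun j =>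
          η * (n : ℝ) ^ (1 / 2 : ℝ) * ((2 : ℝ) ^ j / n) ^ θ} :=
        measure_mono fun ω => mt fun hgood => by
          simpa only [wpoly_eq_polygonal] using
            rescaled_polygonal_mem_holderBall (s := (partialSum · ω)) (by simp [partialSum])
              (by omega) hθ0 hθ1 hη.le hgood
    _ ≤ _ := measure_exists_dyadic_increment_gt_le hmeas (by linarith) hcq.le hmom (by omega) hη hβ
    _ ≤ ENNReal.ofReal ε := ENNReal.ofReal_le_ofReal hηε.le

/-- **Lemma 4.** If the stationary sequence satisfies the Rosenthal-type bound
E|Σ_{i=k+1}^m h₁(X_i)|^q ≤ c_q (m-k)^{q/2} for some q > 2, then for any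
0 ≤ γ < 1/2 - 1/q the sequence (n^{-1/2} W_{h₁,n}) is uniformly tight in the
Hölder space H^o_γ[0,1]. -/
theorem partial_sum_process_tight_in_holder
    {Ω S : Type*} [MeasurableSpace Ω] [MeasurableSpace S]
    (P : Measure Ω) [IsProbabilityMeasure P]
    (X : ℕ → Ω → S) (hXmeas : ∀ i, Measurable (X i))
    (hstat : IsStationarySeq P X)
    (h1 : S → ℝ) (h1meas : Measurable h1)
    (q : ℝ) (hq : 2 < q)
    (cq : ℝ) (hcq : 0 < cq)
    (hros : ∀ k m : ℕ, k < m →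
      ∫⁻ ω, ENNReal.ofReal (|∑ i ∈ Finset.Icc (k + 1) m, h1 (X i ω)| ^ q) ∂P ≤
        ENNReal.ofReal (cq * ((m : ℝ) - k) ^ (q / 2))) :
    ∀ γ : ℝ, 0 ≤ γ → γ < 1 / 2 - 1 / q →
      ∀ ε > 0, ∃ K : Set (ℝ → ℝ),
        (∀ x ∈ K, MemHolderSpace γ x) ∧ HolderSeqCompact γ K ∧
        ∀ n : ℕ, 1 ≤ n →
          P {ω | (fun t => (n : ℝ) ^ (-(1/2) : ℝ) * Wpoly h1 X n ω t) ∉ K} ≤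
            ENNReal.ofReal ε :=
  partial_sum_process_tight_in_holder_general P X hXmeas h1 h1meas q hq cq hcq hros
end
end
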